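/- arXiv:1603.05811 — 9 statements merged into one kernel-verified Lean document; each statement's English description precedes it below -/
import Mathlib

section
/- For a prime p and positive integers n, j with n < p and j < p, the sum $\sum_{i=0}^{p-1} i^n \zeta_p^{ij}$ is congruent to $\frac{(-1)^{n-1} n! \, p}{j^n (\zeta_p - 1)^n}$ modulo the ideal generated by $\frac{p}{(\zeta_p - 1)^{n-1}}$ in $\mathbb{Z}_{(p)}[\zeta_p]$. -/
/-!
Write `t = ζ - 1` and `w = 1 + ζ + ⋯ + ζ ^ (j - 1)`, so `ζ ^ j = 1 + t w` and `w ≡ j (mod t)`.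
Binomial expansion gives `∑ᵢ i ^ n ζ ^ (i j) = ∑ₖ Aₖ (t w) ^ k` with `Aₖ = ∑_{i<p} i ^ n C(i, k)`.
As `k! Aₖ` is the sum over `𝔽_p` of the polynomial `X ^ n (X)ₖ` of degree `n + k`, we get
`p ∣ Aₖ` for `k < p - 1 - n` and, by Wilson, `A_{p-1-n} ≡ (-1) ^ n n! (mod p)`.

Factoring `p = (-1) ^ (p - 1) ∏_{0<k<p} (ζ ^ k - 1)` with `ζ ^ k - 1 = t (1 + ⋯ + ζ ^ (k - 1))`
gives `t ^ (p - 1) = p v` for a unit `v ≡ (-1) ^ (p - 1) / (p - 1)! ≡ -1 (mod t)`.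
So every term with `k ≠ p - 1 - n` lies in `(p / t ^ (n - 1))`, while the term `k = p - 1 - n` is
`A_{p-1-n} w ^ (p-1-n) v p / t ^ n ≡ (-1) ^ (n - 1) n! j ^ (p - 1 - n) p / t ^ n`,
and `j ^ (p - 1) ≡ 1`.

After clearing denominators this all happens in any domain containing `ζ`; only `j⁻ⁿ` needs
the localization `ℤ_(p)`.
-/

/-- The subring `ℤ_(p)[ζ]` of a field `K`: the subring generated by `ζ` together with all
rational numbers whose denominator is prime to `p` (i.e. the localization `ℤ_(p)` of `ℤ`
at the prime ideal `pℤ`, viewed inside `K`). -/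
def ZpLocAdjoin (p : ℕ) {K : Type*} [Field K] (ζ : K) : Subring K :=
  Subring.closure ({ζ} ∪ {x : K | ∃ a b : ℤ, ¬ (p : ℤ) ∣ b ∧ (b : K) * x = (a : K)})

open Finset Polynomial Nat

namespace FiniteField

variable {F : Type*} [Field F] [Fintype F]

theorem sum_pow_card_sub_one : ∑ x : F, x ^ (Fintype.card F - 1) = -1 := by
  classical
  have hq := Fintype.one_lt_card (α := F)
  have h (x : F) : x ^ (Fintype.card F - 1) = if x ≠ 0 then 1 else 0 := by
    split_ifs with hx
    · exact pow_card_sub_one_eq_one x hx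
    · rw [not_not.mp hx, zero_pow (by omega)]
  simp only [h, sum_boole, filter_ne', mem_univ, card_erase_of_mem, Finset.card_univ]
  rw [Nat.cast_sub hq.le]
  simp

theorem sum_eval_eq_neg_coeff (P : F[X]) (hP : P.natDegree < Fintype.card F) :
    ∑ x : F, P.eval x = -P.coeff (Fintype.card F - 1) := by
  calc ∑ x : F, P.eval x = ∑ d ∈ range (Fintype.card F), P.coeff d * ∑ x : F, x ^ d := by
        simp_rw [eval_eq_sum_range' hP, mul_sum]
        exact sum_comm
    _ = ∑ d ∈ range (Fintype.card F), if d = Fintype.card F - 1 then -P.coeff d else 0 := by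
        refine sum_congr rfl fun d hd => ?_
        split_ifs with h
        · rw [h, sum_pow_card_sub_one, mul_neg_one]
        · rw [sum_pow_lt_card_sub_one F d (by grind), mul_zero]
    _ = -P.coeff (Fintype.card F - 1) := by simp

end FiniteField

theorem ZMod.sum_range_natCast {p : ℕ} [NeZero p] {M : Type*} [AddCommMonoid M]
    (f : ZMod p → M) : ∑ i ∈ range p, f i = ∑ x : ZMod p, f x :=
  sum_nbij' (↑) ZMod.val (fun _ _ => mem_univ _) (fun x _ => mem_range.mpr x.val_lt)
    (fun _ hi => ZMod.val_cast_of_lt (mem_range.mp hi)) (fun x _ => ZMod.natCast_zmod_val x)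
    (fun _ _ => rfl)

theorem Int.cast_eq_intCast_of_natCast_eq_zero {B : Type*} [Ring B] {p : ℕ} (hp : (p : B) = 0)
    {a b : ℤ} (h : (a : ZMod p) = b) : (a : B) = b := by
  obtain ⟨c, hc⟩ := (ZMod.intCast_eq_intCast_iff_dvd_sub a b p).mp h
  rw [← sub_eq_zero, ← neg_sub, ← Int.cast_sub, hc, Int.cast_mul, Int.cast_natCast, hp,
    zero_mul, neg_zero]

def powChooseSum (p n k : ℕ) : ℕ := ∑ i ∈ range p, i ^ n * i.choose k

section PowChooseSum

variable {p : ℕ} [Fact p.Prime]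

theorem ZMod.natCast_factorial_ne_zero {k : ℕ} (hk : k < p) : (k ! : ZMod p) ≠ 0 := by
  rw [Ne, ZMod.natCast_eq_zero_iff, (Fact.out : p.Prime).dvd_factorial]
  omega

theorem cast_factorial_mul_powChooseSum {n k : ℕ} (h : k + n ≤ p - 1) :
    ((k ! * powChooseSum p n k : ℕ) : ZMod p) = if k + n = p - 1 then -1 else 0 := by
  set P : (ZMod p)[X] := X ^ n * descPochhammer (ZMod p) k
  have hP : P.Monic := (monic_X_pow n).mul (monic_descPochhammer _ k)
  have hdeg : P.natDegree = k + n := by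
    rw [(monic_X_pow n).natDegree_mul (monic_descPochhammer _ k), natDegree_X_pow,
      descPochhammer_natDegree, add_comm]
  have hp := (Fact.out : p.Prime).one_lt
  calc ((k ! * powChooseSum p n k : ℕ) : ZMod p)
      = ∑ i ∈ range p, P.eval (i : ZMod p) := by
        simp [P, powChooseSum, mul_sum, descPochhammer_eval_eq_descFactorial,
          descFactorial_eq_factorial_mul_choose, mul_left_comm]
    _ = -P.coeff (p - 1) := by
        rw [ZMod.sum_range_natCast (fun x => P.eval x), FiniteField.sum_eval_eq_neg_coeff P
          (by rw [ZMod.card]; omega), ZMod.card]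
    _ = if k + n = p - 1 then -1 else 0 := by
        split_ifs with h'
        · rw [← h', ← hdeg, hP.coeff_natDegree]
        · rw [coeff_eq_zero_of_natDegree_lt (by omega), neg_zero]

theorem cast_powChooseSum_eq_zero {n k : ℕ} (h : k + n < p - 1) :
    (powChooseSum p n k : ZMod p) = 0 := by
  have := cast_factorial_mul_powChooseSum (p := p) h.le
  rw [if_neg h.ne, Nat.cast_mul] at this
  exact (mul_eq_zero.mp this).resolve_left (ZMod.natCast_factorial_ne_zero (by omega))

theorem cast_powChooseSum_sub_one_sub {n : ℕ} (hn : n < p) :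
    (powChooseSum p n (p - 1 - n) : ZMod p) = (-1) ^ n * n ! := by
  have h := cast_factorial_mul_powChooseSum (p := p) (n := n) (k := p - 1 - n) (by omega)
  have hW : (((p - 1 - n) ! * (p - 1).descFactorial n : ℕ) : ZMod p) = -1 := by
    rw [factorial_mul_descFactorial (by omega), ZMod.wilsons_lemma]
  rw [if_pos (by omega), Nat.cast_mul] at h
  rw [Nat.cast_mul, ZMod.cast_descFactorial (by omega)] at hW
  exact mul_left_cancel₀ (ZMod.natCast_factorial_ne_zero (by omega)) (h.trans hW.symm)

theorem neg_cast_powChooseSum_mul_pow_eq {B : Type*} [CommRing B] (hp0 : (p : B) = 0) {n j : ℕ}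
    (hn0 : 0 < n) (hn : n < p) (hj : ¬ p ∣ j) :
    -((powChooseSum p n (p - 1 - n) : B) * j ^ (p - 1)) = (-1) ^ (n - 1) * n ! := by
  have hZ : ((-(powChooseSum p n (p - 1 - n) * j ^ (p - 1)) : ℤ) : ZMod p)
      = (((-1) ^ (n - 1) * n ! : ℤ) : ZMod p) := by
    have hsign : (-1 : ZMod p) ^ n = -(-1) ^ (n - 1) := by
      obtain ⟨k, rfl⟩ := Nat.exists_eq_add_one_of_ne_zero hn0.ne'
      rw [pow_succ, Nat.add_sub_cancel, mul_neg_one]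
    push_cast
    rw [cast_powChooseSum_sub_one_sub hn,
      ZMod.pow_card_sub_one_eq_one (by rwa [Ne, ZMod.natCast_eq_zero_iff]), hsign]
    ring
  have := Int.cast_eq_intCast_of_natCast_eq_zero hp0 hZ
  push_cast at this
  exact this

end PowChooseSum

section CommRing

variable {A : Type*} [CommRing A]

theorem sum_range_mul_add_one_pow (f : ℕ → A) (x : A) (m : ℕ) :
    ∑ i ∈ range m, f i * (x + 1) ^ i
      = ∑ k ∈ range m, (∑ i ∈ range m, f i * i.choose k) * x ^ k := by
  have h (i) (hi : i ∈ range m) :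
      f i * (x + 1) ^ i = ∑ k ∈ range m, f i * i.choose k * x ^ k := by
    rw [add_pow, mul_sum]
    refine sum_subset (by grind) (fun k _ hk => ?_) |>.trans (sum_congr rfl fun k _ => by ring)
    rw [choose_eq_zero_of_lt (by grind), Nat.cast_zero, mul_zero, mul_zero]
  rw [sum_congr rfl h, sum_comm]
  simp_rw [sum_mul]

theorem mul_dvd_sum_mul_pow_mul_pow_sub {p n : ℕ} {t v : A} (w : A) (a : ℕ → A)
    (hv : t ^ (p - 1) = p * v) (hn0 : 0 < n) (hn : n < p)
    (ha : ∀ k < p - 1 - n, (p : A) ∣ a k) :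
    (p * t : A) ∣ (∑ k ∈ range p, a k * (t * w) ^ k) * t ^ n
      - p * (a (p - 1 - n) * w ^ (p - 1 - n) * v) := by
  have hmid : a (p - 1 - n) * (t * w) ^ (p - 1 - n) * t ^ n
      = p * (a (p - 1 - n) * w ^ (p - 1 - n) * v) := by
    have ht : t ^ (p - 1) = t ^ (p - 1 - n) * t ^ n := by rw [← pow_add]; congr 1; omega
    linear_combination (a (p - 1 - n) * w ^ (p - 1 - n)) * (hv - ht)
  rw [sum_mul, ← add_sum_erase _ _ (mem_range.mpr (by omega : p - 1 - n < p)), hmid,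
    add_sub_cancel_left]
  refine dvd_sum fun k hk => ?_
  obtain ⟨hk, -⟩ := mem_erase.mp hk
  rw [show a k * (t * w) ^ k * t ^ n = a k * t ^ (k + n) * w ^ k by ring]
  refine Dvd.dvd.mul_right ?_ _
  rcases Nat.lt_or_gt_of_ne hk with hlt | hgt
  · exact mul_dvd_mul (ha k hlt) (dvd_pow_self t (by omega))
  · rw [show k + n = p - 1 + (k + n - (p - 1)) by omega, pow_add, hv, mul_assoc]
    exact (mul_dvd_mul_left _ ((dvd_pow_self t (by omega)).mul_left v)).mul_left _

theorem Ideal.Quotient.mk_span_sub_one_geom_sum (ζ : A) (j : ℕ) :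
    Ideal.Quotient.mk (Ideal.span {ζ - 1}) (∑ i ∈ range j, ζ ^ i) = j := by
  have h : Ideal.Quotient.mk (Ideal.span {ζ - 1}) ζ = 1 := by
    rw [← map_one (Ideal.Quotient.mk _), Ideal.Quotient.mk_eq_mk_iff_sub_mem]
    exact Ideal.mem_span_singleton_self _
  simp [h]

variable [IsDomain A] {ζ : A} {p : ℕ}

theorem IsPrimitiveRoot.exists_sub_one_pow_eq_mul (hp : p.Prime) (hζ : IsPrimitiveRoot ζ p) :
    ∃ v : A, (ζ - 1) ^ (p - 1) = p * v ∧ Ideal.Quotient.mk (Ideal.span {ζ - 1}) v = -1 := by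
  have := Fact.mk hp
  have := hp.two_le
  set π := Ideal.Quotient.mk (Ideal.span {ζ - 1})
  set u : A := (-1) ^ (p - 1) * ∏ k ∈ range (p - 1), ∑ i ∈ range (k + 1), ζ ^ i
  have hu : IsUnit u := (isUnit_neg_one.pow _).mul <| IsUnit.prod_iff.mpr fun k hk =>
    hζ.geom_sum_isUnit hp.two_le <| Nat.Coprime.symm <|
      hp.coprime_iff_not_dvd.mpr <| Nat.not_dvd_of_pos_of_lt k.succ_pos (by grind)
  have hpu : (p : A) = u * (ζ - 1) ^ (p - 1) := by
    have hζ' : IsPrimitiveRoot ζ (p - 1 + 1) := by rwa [Nat.sub_add_cancel hp.one_le]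
    rw [← Nat.sub_one_add_one hp.ne_zero, Nat.cast_succ, ← hζ'.prod_pow_sub_one_eq_order,
      Nat.add_sub_cancel]
    simp_rw [← mul_geom_sum, prod_mul_distrib, prod_const, card_range, u]
    ring
  have hπu : π u = -1 := by
    have hp0 : (p : A ⧸ Ideal.span {ζ - 1}) = 0 := by
      rw [← map_natCast π, hpu, Ideal.Quotient.eq_zero_iff_dvd]
      exact (dvd_pow_self _ (by omega)).mul_left u
    have hπW (k : ℕ) : π (∑ i ∈ range k, ζ ^ i) = k :=
      Ideal.Quotient.mk_span_sub_one_geom_sum ζ k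
    calc π u = (((-1) ^ (p - 1) * (p - 1)! : ℤ) : A ⧸ Ideal.span {ζ - 1}) := by
          simp only [u, map_mul, map_pow, map_neg, map_one, map_prod, hπW]
          rw [← prod_range_add_one_eq_factorial]
          push_cast
          rfl
      _ = ((-1 : ℤ) : A ⧸ Ideal.span {ζ - 1}) := by
          refine Int.cast_eq_intCast_of_natCast_eq_zero hp0 ?_
          push_cast
          rw [ZMod.wilsons_lemma, ZMod.pow_card_sub_one_eq_one (neg_ne_zero.mpr one_ne_zero),
            one_mul]
      _ = -1 := by push_cast; rfl
  refine ⟨↑hu.unit⁻¹, ?_, ?_⟩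
  · rw [hpu, mul_comm u, mul_assoc, hu.mul_val_inv, mul_one]
  · have := congrArg π hu.val_inv_mul
    rw [map_mul, map_one, hπu] at this
    linear_combination -this

theorem IsPrimitiveRoot.dvd_sum_pow_mul_pow_sub {n j : ℕ} (hp : p.Prime)
    (hζ : IsPrimitiveRoot ζ p) (hn0 : 0 < n) (hn : n < p) (hj : ¬ p ∣ j) :
    (p * (ζ - 1) : A) ∣ (∑ i ∈ range p, (i : A) ^ n * ζ ^ (i * j)) * (ζ - 1) ^ n * j ^ n
      - p * ((-1) ^ (n - 1) * n !) := by
  have := Fact.mk hp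
  have := hp.two_le
  obtain ⟨v, hv, hπv⟩ := hζ.exists_sub_one_pow_eq_mul hp
  set S := ∑ i ∈ range p, (i : A) ^ n * ζ ^ (i * j)
  set w := ∑ i ∈ range j, ζ ^ i
  set M := (powChooseSum p n (p - 1 - n) : A) * w ^ (p - 1 - n) * v
  have hS : S = ∑ k ∈ range p, (powChooseSum p n k : A) * ((ζ - 1) * w) ^ k := by
    have hζj : ζ ^ j = (ζ - 1) * w + 1 := by rw [mul_geom_sum]; ring
    simp_rw [S, mul_comm _ j, pow_mul, hζj, sum_range_mul_add_one_pow, powChooseSum]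
    push_cast
    rfl
  have hdec : (p * (ζ - 1) : A) ∣ S * (ζ - 1) ^ n - p * M := hS ▸
    mul_dvd_sum_mul_pow_mul_pow_sub w (fun k => (powChooseSum p n k : A)) hv hn0 hn
      fun k hk => Nat.cast_dvd_cast <| (ZMod.natCast_eq_zero_iff _ _).mp <|
        cast_powChooseSum_eq_zero (by omega)
  have hmid : ζ - 1 ∣ M * j ^ n - (-1) ^ (n - 1) * n ! := by
    have hp0 : (p : A ⧸ Ideal.span {ζ - 1}) = 0 := by
      have h := congrArg (Ideal.Quotient.mk (Ideal.span {ζ - 1})) hv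
      rw [map_pow, map_mul, hπv, map_natCast, Ideal.Quotient.mk_singleton_self,
        zero_pow (by omega)] at h
      linear_combination h
    rw [← Ideal.Quotient.eq_zero_iff_dvd, map_sub, sub_eq_zero]
    simp only [M, w, map_mul, map_pow, map_natCast, map_neg, map_one, hπv,
      Ideal.Quotient.mk_span_sub_one_geom_sum]
    rw [← neg_cast_powChooseSum_mul_pow_eq hp0 hn0 hn hj,
      ← pow_sub_mul_pow _ (by omega : n ≤ p - 1)]
    ring
  rw [show S * (ζ - 1) ^ n * j ^ n - p * ((-1) ^ (n - 1) * n !)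
      = j ^ n * (S * (ζ - 1) ^ n - p * M) + p * (M * j ^ n - (-1) ^ (n - 1) * n !) by ring]
  exact dvd_add (dvd_mul_of_dvd_right hdec _) (mul_dvd_mul_left _ hmid)

end CommRing

namespace ZpLocAdjoin

variable {p : ℕ} {K : Type*} [Field K] {ζ : K}

theorem self_mem : ζ ∈ ZpLocAdjoin p ζ :=
  Subring.subset_closure (Or.inl rfl)

theorem inv_natCast_mem [CharZero K] {b : ℕ} (hb : ¬ p ∣ b) :
    (b : K)⁻¹ ∈ ZpLocAdjoin p ζ := by
  have hb0 : (b : K) ≠ 0 := Nat.cast_ne_zero.mpr (by rintro rfl; exact hb (dvd_zero p))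
  exact Subring.subset_closure (Or.inr ⟨1, b, by exact_mod_cast hb, by simp [hb0]⟩)

end ZpLocAdjoin

/-- For a prime `p`, a primitive `p`-th root of unity `ζ`, and positive integers `n, j < p`,
the sum `∑_{i=0}^{p-1} i^n ζ^{ij}` is congruent to `(-1)^(n-1) n! p / (j^n (ζ-1)^n)` modulo
the ideal generated by `p / (ζ-1)^(n-1)` in `ℤ_(p)[ζ]`. -/
theorem sum_pow_zeta_congr (p : ℕ) (hp : p.Prime) (K : Type*) [Field K] [CharZero K]
    (ζ : K) (hζ : IsPrimitiveRoot ζ p) (n j : ℕ) (hn0 : 0 < n) (hn : n < p)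
    (hj0 : 0 < j) (hj : j < p) :
    ∃ c ∈ ZpLocAdjoin p ζ,
      (∑ i ∈ Finset.range p, (i : K) ^ n * ζ ^ (i * j))
        - ((-1 : K) ^ (n - 1) * (Nat.factorial n : K) * (p : K)) / ((j : K) ^ n * (ζ - 1) ^ n)
      = c * ((p : K) / (ζ - 1) ^ (n - 1)) := by
  have hpj : ¬ p ∣ j := Nat.not_dvd_of_pos_of_lt hj0 hj
  let ζ' : ZpLocAdjoin p ζ := ⟨ζ, ZpLocAdjoin.self_mem⟩
  have hζ' : IsPrimitiveRoot ζ' p := IsPrimitiveRoot.coe_submonoidClass_iff.mp hζ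
  obtain ⟨c, hc⟩ := hζ'.dvd_sum_pow_mul_pow_sub hp hn0 hn hpj
  have hcK := congrArg Subtype.val hc
  push_cast [ζ'] at hcK
  have ht : ζ - 1 ≠ 0 := sub_ne_zero.mpr (hζ.ne_one hp.one_lt)
  have hjK : (j : K) ≠ 0 := Nat.cast_ne_zero.mpr hj0.ne'
  have htn : (ζ - 1) ^ n = (ζ - 1) ^ (n - 1) * (ζ - 1) := by
    rw [← pow_succ, Nat.sub_add_cancel hn0]
  refine ⟨((j : K) ^ n)⁻¹ * c, mul_mem ?_ c.2, ?_⟩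
  · simpa using ZpLocAdjoin.inv_natCast_mem (ζ := ζ) (mt hp.dvd_of_dvd_pow hpj)
  · rw [htn] at hcK ⊢
    field_simp
    linear_combination hcK
end

section
/- For a prime number p, the element $(\zeta_p - 1)^{p-1}$ is congruent to $-p$ modulo the ideal generated by $p(\zeta_p - 1)$ in $\mathbb{Z}[\zeta_p]$. -/
/-!
Put `x = ζ - 1`. Since `(x + 1) ^ p = 1` and every middle binomial coefficient `p.choose k`
(`0 < k < p`) is divisible by `p`, the binomial expansion gives
`0 = x ^ p + p * x + p * x ^ 2 * s` with `s ∈ ℤ[x] = ℤ[ζ]`. Cancelling `x ≠ 0` leaves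
`x ^ (p - 1) + p = p * x * (-s)`.
-/

open Finset

/-- The binomial expansion of `(x + 1) ^ p`, less its terms of degree `0`, `1` and `p`, divided by
`p * x ^ 2`; for prime `p` the division by `p` is exact. -/
def primeBinomialTail {R : Type*} [Semiring R] (p : ℕ) (x : R) : R :=
  ∑ k ∈ Ioo 1 p, x ^ (k - 2) * ↑(p.choose k / p)

lemma primeBinomialTail_mem {R S : Type*} [Semiring R] [SetLike S R] [SubsemiringClass S R]
    {s : S} (p : ℕ) {x : R} (hx : x ∈ s) : primeBinomialTail p x ∈ s :=
  sum_mem fun _ _ ↦ mul_mem (pow_mem hx _) (natCast_mem s _)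

lemma add_one_pow_prime_eq {R : Type*} [CommSemiring R] {p : ℕ} (hp : p.Prime) (x : R) :
    (x + 1) ^ p = x ^ p + 1 + p * x + p * x ^ 2 * primeBinomialTail p x := by
  have hsplit : Ioo 0 p = insert 1 (Ioo 1 p) := by
    ext k
    simp only [mem_Ioo, mem_insert]
    have := hp.two_le
    omega
  have htail : ∑ k ∈ Ioo 1 p, x ^ k * ↑(p.choose k / p) = x ^ 2 * primeBinomialTail p x := by
    rw [primeBinomialTail, mul_sum]
    refine sum_congr rfl fun k hk ↦ ?_
    rw [← mul_assoc, ← pow_add, Nat.add_sub_cancel' (mem_Ioo.1 hk).1]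
  rw [add_pow_prime_eq' hp, hsplit, sum_insert (by simp)]
  simp only [one_pow, mul_one, htail, pow_one, Nat.choose_one_right, Nat.div_self hp.pos,
    Nat.cast_one]
  ring

lemma pow_pred_add_prime_eq_of_add_one_pow_eq_one {R : Type*} [CommRing R] [NoZeroDivisors R]
    {p : ℕ} (hp : p.Prime) {x : R} (hx : x ≠ 0) (h : (x + 1) ^ p = 1) :
    x ^ (p - 1) + p = p * x * -primeBinomialTail p x := by
  have hxp : x ^ p = x * x ^ (p - 1) := by rw [← pow_succ', Nat.sub_add_cancel hp.one_le]
  apply mul_left_cancel₀ hx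
  linear_combination h - add_one_pow_prime_eq hp x - hxp

theorem zeta_sub_one_pow_congr_general (p : ℕ) (hp : p.Prime) (K : Type*) [Field K]
    (ζ : K) (hζ : IsPrimitiveRoot ζ p) :
    ∃ c ∈ Subring.closure {ζ}, (ζ - 1) ^ (p - 1) - (-(p : K)) = (p : K) * (ζ - 1) * c := by
  have hx : ζ - 1 ≠ 0 := sub_ne_zero.2 (hζ.ne_one hp.one_lt)
  have hpow : (ζ - 1 + 1) ^ p = 1 := by rw [sub_add_cancel, hζ.pow_eq_one]
  have hmem : ζ - 1 ∈ Subring.closure {ζ} :=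
    sub_mem (Subring.subset_closure rfl) (one_mem _)
  refine ⟨-primeBinomialTail p (ζ - 1), neg_mem (primeBinomialTail_mem p hmem), ?_⟩
  rw [sub_neg_eq_add]
  exact pow_pred_add_prime_eq_of_add_one_pow_eq_one hp hx hpow

/-- For a prime `p` and a primitive `p`-th root of unity `ζ`, the element `(ζ - 1)^(p-1)` is
congruent to `-p` modulo the ideal generated by `p(ζ - 1)` in `ℤ[ζ]` (realized as the subring
generated by `ζ` in a characteristic-zero field). -/
theorem zeta_sub_one_pow_congr (p : ℕ) (hp : p.Prime) (K : Type*) [Field K] [CharZero K]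
    (ζ : K) (hζ : IsPrimitiveRoot ζ p) :
    ∃ c ∈ Subring.closure {ζ}, (ζ - 1) ^ (p - 1) - (-(p : K)) = (p : K) * (ζ - 1) * c :=
  zeta_sub_one_pow_congr_general p hp K ζ hζ
end

section
/- (Dilcher-type identity) Let $\Bbbk = (k_1, \dots, k_m)$ be a tuple of positive integers with Hoffman dual $\Bbbk^\vee = (k_1', \dots, k_{m'}')$, and let N be a positive integer. Then the following polynomial identity holds in $\mathbb{Q}[t]$: $\sum_{N \geq n_1 \geq \cdots \geq n_m \geq 1} (-1)^{n_1} \binom{N}{n_1} \frac{t^{n_m}}{n_1^{k_1} \cdots n_m^{k_m}} = \sum_{N \geq n_1 \geq \cdots \geq n_{m'} \geq 1} \frac{(1-t)^{n_{m'}} - 1}{n_1^{k_1'} \cdots n_{m'}^{k_{m'}'}}$. -/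
open Polynomial

/-- The finite set of weakly decreasing tuples `N ≥ n_1 ≥ n_2 ≥ ⋯ ≥ n_m ≥ 1`, encoded as
functions `Fin m → ℕ` (so `n i` is `n_{i+1}`, and antitonicity is `i ≤ j → n j ≤ n i`). -/
def decTuples (m N : ℕ) : Finset (Fin m → ℕ) :=
  (Fintype.piFinset fun _ => Finset.Icc 1 N).filter fun n => ∀ i j : Fin m, i ≤ j → n j ≤ n i

/-- The set of partial sums `{k_1, k_1 + k_2, …, k_1 + ⋯ + k_{m-1}}` of an index
`𝕜 = (k_1, …, k_m)` (the "comma positions" of the corresponding word of weight `wt 𝕜`);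
the total sum is removed. -/
def commaSet {m : ℕ} (k : Fin m → ℕ) : Finset ℕ :=
  (Finset.image (fun i : Fin m => ∑ j ∈ Finset.Iic i, k j) Finset.univ).erase (∑ j, k j)

/-!
Read an index as the word `1 □ 1 , 1 ⋯` of its Hoffman encoding. As a function of the last
variable `n`, the coefficient of `t ^ n` on the left is obtained from `n ↦ (-1) ^ n * C(N, n)`
by reading the word from left to right: each letter `1` divides by `n`, and when a comma
precedes it the tail sum `a ↦ (n ↦ ∑_{t = n}^N a t)` is applied first. Reading the dual word
from the constant `1` in the same way gives coefficients `b` with the right side equal to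
`∑_j b j ((1 - t) ^ j - 1)`, whose coefficient of `t ^ n` is `(-1) ^ n ∑_{j ≥ n} C(j, n) b j`.
This transform of `b` exchanges the two reading steps (by the hockey-stick identity and the
partial alternating sums of binomial coefficients), which is exactly the exchange of `□` and
`,` defining the dual index; induction on the weight finishes the proof.
-/

open Finset

lemma sum_Icc_choose_div (n M : ℕ) :
    ∑ j ∈ Icc (n + 1) M, (j.choose (n + 1) : ℚ) / j = M.choose (n + 1) / (n + 1) := by
  induction M with
  | zero => simp
  | succ M ih =>
    rcases le_or_gt (n + 1) (M + 1) with h | h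
    · rw [sum_Icc_succ_top h, ih]
      have hmul : ((M + 1 : ℕ) : ℚ) * M.choose n = (M + 1).choose (n + 1) * (n + 1) := by
        exact_mod_cast Nat.add_one_mul_choose_eq M n
      have hpascal : ((M + 1).choose (n + 1) : ℚ) = M.choose n + M.choose (n + 1) := by
        exact_mod_cast Nat.choose_succ_succ M n
      field_simp
      push_cast at hmul ⊢
      linear_combination -(M + 1 : ℚ) * hpascal - hmul
    · rw [Icc_eq_empty_of_lt h, Nat.choose_eq_zero_of_lt h]
      simp

lemma sum_Icc_neg_one_pow_mul_choose {n j : ℕ} (hnj : n ≤ j) :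
    ∑ t ∈ Icc (n + 1) (j + 1), (-1 : ℚ) ^ t * (j + 1).choose t =
      (-1) ^ (n + 1) * j.choose n := by
  have hpartial :
      ∑ t ∈ range (n + 1), (-1 : ℚ) ^ t * (j + 1).choose t = (-1) ^ n * j.choose n := by
    exact_mod_cast Int.alternating_sum_range_choose_eq_choose
  have htotal : ∑ t ∈ range (j + 1 + 1), (-1 : ℚ) ^ t * (j + 1).choose t = 0 := by
    exact_mod_cast Int.alternating_sum_range_choose_of_ne (Nat.succ_ne_zero j)
  rw [← Ico_add_one_right_eq_Icc, sum_Ico_eq_sub _ (by omega), htotal, hpartial]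
  ring

lemma cast_choose_div_eq {n j : ℕ} (hn : 0 < n) (hj : 0 < j) :
    (j.choose n : ℚ) / j = (j - 1).choose (n - 1) / n := by
  obtain ⟨n, rfl⟩ := Nat.exists_eq_succ_of_ne_zero hn.ne'
  obtain ⟨j, rfl⟩ := Nat.exists_eq_succ_of_ne_zero hj.ne'
  have hmul : ((j + 1 : ℕ) : ℚ) * j.choose n = (j + 1).choose (n + 1) * (n + 1) := by
    exact_mod_cast Nat.add_one_mul_choose_eq j n
  simp only [Nat.succ_sub_one]
  field_simp
  push_cast at hmul ⊢
  linear_combination -hmul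

lemma sum_Icc_sum_Icc_comm {M : Type*} [AddCommMonoid M] (n N : ℕ) (F : ℕ → ℕ → M) :
    ∑ j ∈ Icc n N, ∑ t ∈ Icc j N, F j t = ∑ t ∈ Icc n N, ∑ j ∈ Icc n t, F j t :=
  sum_comm' fun j t => by simp only [mem_Icc]; omega

section Transforms

variable (N : ℕ)

def tailSum (a : ℕ → ℚ) (n : ℕ) : ℚ := ∑ t ∈ Icc n N, a t

def divByIndex (a : ℕ → ℚ) (n : ℕ) : ℚ := (n : ℚ)⁻¹ * a n

def binomialTransform (b : ℕ → ℚ) (n : ℕ) : ℚ :=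
  (-1) ^ n * ∑ j ∈ Icc n N, (j.choose n : ℚ) * b j

/-- Position `x` of the word of weight `w` (between its `x`-th and `(x+1)`-th letter `1`) is a
comma iff `x ∈ S`; position `0` does not occur, and comma sets never contain it. -/
def wordCoeff (f : ℕ → ℚ) (S : Finset ℕ) : ℕ → ℕ → ℚ
  | 0 => f
  | w + 1 => divByIndex (if w ∈ S then tailSum N (wordCoeff f S w) else wordCoeff f S w)

variable {N}

lemma binomialTransform_divByIndex_tailSum (b : ℕ → ℚ) {n : ℕ} (hn : 0 < n) :
    binomialTransform N (divByIndex (tailSum N b)) n =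
      divByIndex (binomialTransform N b) n := by
  obtain ⟨n, rfl⟩ := Nat.exists_eq_succ_of_ne_zero hn.ne'
  unfold binomialTransform divByIndex tailSum
  calc (-1) ^ (n + 1) * ∑ j ∈ Icc (n + 1) N,
          (j.choose (n + 1) : ℚ) * ((j : ℚ)⁻¹ * ∑ t ∈ Icc j N, b t)
      = (-1) ^ (n + 1) * ∑ j ∈ Icc (n + 1) N, ∑ t ∈ Icc j N,
          (j.choose (n + 1) : ℚ) / j * b t := by
        simp only [mul_sum, div_eq_mul_inv, mul_assoc]
    _ = (-1) ^ (n + 1) * ∑ t ∈ Icc (n + 1) N,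
          (∑ j ∈ Icc (n + 1) t, (j.choose (n + 1) : ℚ) / j) * b t := by
        rw [sum_Icc_sum_Icc_comm]
        simp only [sum_mul]
    _ = ((n + 1 : ℕ) : ℚ)⁻¹ *
          ((-1) ^ (n + 1) * ∑ t ∈ Icc (n + 1) N, (t.choose (n + 1) : ℚ) * b t) := by
        simp only [sum_Icc_choose_div, mul_sum]
        refine sum_congr rfl fun t _ => ?_
        push_cast
        ring

lemma binomialTransform_divByIndex (b : ℕ → ℚ) {n : ℕ} (hn : 0 < n) :
    binomialTransform N (divByIndex b) n =
      divByIndex (tailSum N (binomialTransform N b)) n := by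
  obtain ⟨n, rfl⟩ := Nat.exists_eq_succ_of_ne_zero hn.ne'
  have hinner : ∀ j ∈ Icc (n + 1) N,
      ((n + 1 : ℕ) : ℚ)⁻¹ * ∑ t ∈ Icc (n + 1) j, (-1) ^ t * (j.choose t : ℚ) =
        (-1) ^ (n + 1) * ((j.choose (n + 1) : ℚ) * (j : ℚ)⁻¹) := by
    intro j hj
    obtain ⟨hnj, -⟩ := mem_Icc.1 hj
    obtain ⟨j, rfl⟩ := Nat.exists_eq_succ_of_ne_zero (by omega : j ≠ 0)
    rw [sum_Icc_neg_one_pow_mul_choose (by omega), ← div_eq_mul_inv,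
      cast_choose_div_eq n.succ_pos j.succ_pos]
    simp only [Nat.succ_sub_one, Nat.cast_succ]
    ring
  unfold binomialTransform divByIndex tailSum
  calc (-1) ^ (n + 1) * ∑ j ∈ Icc (n + 1) N, (j.choose (n + 1) : ℚ) * ((j : ℚ)⁻¹ * b j)
      = ∑ j ∈ Icc (n + 1) N,
          ((n + 1 : ℕ) : ℚ)⁻¹ * (∑ t ∈ Icc (n + 1) j, (-1) ^ t * (j.choose t : ℚ)) *
            b j := by
        rw [mul_sum]
        refine sum_congr rfl fun j hj => ?_
        rw [hinner j hj]
        ring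
    _ = ((n + 1 : ℕ) : ℚ)⁻¹ *
          ∑ t ∈ Icc (n + 1) N, (-1) ^ t * ∑ j ∈ Icc t N, (j.choose t : ℚ) * b j := by
        simp only [mul_sum, sum_mul, mul_assoc]
        rw [sum_Icc_sum_Icc_comm]

variable {f : ℕ → ℚ}

lemma wordCoeff_congr {S S' : Finset ℕ} {w : ℕ} (h : ∀ x < w, x ∈ S ↔ x ∈ S') :
    wordCoeff N f S w = wordCoeff N f S' w := by
  induction w with
  | zero => rfl
  | succ w ih => simp only [wordCoeff, h w w.lt_succ_self, ih fun x hx => h x (by omega)]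

theorem wordCoeff_eqOn_binomialTransform {S S' : Finset ℕ} {w : ℕ} (hw : 0 < w)
    (h0 : 0 ∉ S) (h0' : 0 ∉ S') (hdual : ∀ x, 0 < x → x < w → (x ∈ S' ↔ x ∉ S)) :
    Set.EqOn (wordCoeff N (fun n => (-1) ^ n * N.choose n) S w)
      (binomialTransform N (wordCoeff N (fun _ => 1) S' w)) (Set.Icc 1 N) := by
  induction w, hw using Nat.le_induction with
  | base =>
    intro n hn
    obtain ⟨n, rfl⟩ := Nat.exists_eq_succ_of_ne_zero (by simp at hn; omega : n ≠ 0)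
    simp only [wordCoeff, h0, h0', if_false, binomialTransform, divByIndex, mul_one,
      ← div_eq_mul_inv, sum_Icc_choose_div]
    push_cast
    ring
  | succ w hw ih =>
    have ih := ih fun x hx hxw => hdual x hx (by omega)
    intro n hn
    have hn0 : 0 < n := hn.1
    by_cases hwS : w ∈ S
    · have hwS' : w ∉ S' := fun h => (hdual w hw (by omega)).1 h hwS
      simp only [wordCoeff, hwS, hwS', if_true, if_false, binomialTransform_divByIndex _ hn0]
      unfold divByIndex tailSum
      rw [sum_congr rfl fun t ht => ih ⟨hn.1.trans (mem_Icc.1 ht).1, (mem_Icc.1 ht).2⟩]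
    · have hwS' : w ∈ S' := (hdual w hw (by omega)).2 hwS
      simp only [wordCoeff, hwS, hwS', if_true, if_false,
        binomialTransform_divByIndex_tailSum _ hn0]
      unfold divByIndex
      rw [ih hn]

end Transforms

section CommaSet

variable {m : ℕ}

lemma zero_notMem_commaSet {k : Fin m → ℕ} (hk : ∀ i, 0 < k i) : 0 ∉ commaSet k := by
  intro h
  obtain ⟨i, -, hi⟩ := mem_image.1 (mem_erase.1 h).2
  have hle : k i ≤ ∑ j ∈ Iic i, k j :=
    single_le_sum (fun j _ => Nat.zero_le (k j)) (mem_Iic.2 le_rfl)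
  have := hk i
  omega

lemma sum_Iic_last (k : Fin (m + 1) → ℕ) : ∑ j ∈ Iic (Fin.last m), k j = ∑ j, k j := by
  rw [← Fin.top_eq_last, Iic_top]

lemma commaSet_snoc (k : Fin m → ℕ) {c : ℕ} (hc : 0 < c) :
    commaSet (Fin.snoc k c : Fin (m + 1) → ℕ) = univ.image fun i => ∑ j ∈ Iic i, k j := by
  ext x
  simp only [commaSet, mem_erase, mem_image, mem_univ, true_and, Fin.exists_fin_succ',
    Fin.sum_Iic_castSucc, Fin.snoc_castSucc, sum_Iic_last, Fin.sum_snoc]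
  constructor
  · rintro ⟨hne, h | h⟩
    · exact h
    · exact absurd h.symm hne
  · rintro ⟨i, rfl⟩
    have : ∑ j ∈ Iic i, k j ≤ ∑ j, k j := sum_le_sum_of_subset (subset_univ _)
    exact ⟨by omega, Or.inl ⟨i, rfl⟩⟩

lemma image_sum_Iic_eq_insert_commaSet (k : Fin (m + 1) → ℕ) :
    (univ.image fun i => ∑ j ∈ Iic i, k j) = insert (∑ j, k j) (commaSet k) :=
  (insert_erase (mem_image.2 ⟨Fin.last m, mem_univ _, sum_Iic_last k⟩)).symm

variable {N : ℕ} {f : ℕ → ℚ}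

lemma wordCoeff_commaSet_snoc_succ (k : Fin m → ℕ) {c : ℕ} (hc : 0 < c) :
    wordCoeff N f (commaSet (Fin.snoc k (c + 1) : Fin (m + 1) → ℕ)) (∑ i, k i + (c + 1)) =
      divByIndex
        (wordCoeff N f (commaSet (Fin.snoc k c : Fin (m + 1) → ℕ)) (∑ i, k i + c)) := by
  rw [commaSet_snoc k c.succ_pos, commaSet_snoc k hc, ← add_assoc, wordCoeff, if_neg]
  intro hmem
  obtain ⟨i, -, hi⟩ := mem_image.1 hmem
  have : ∑ j ∈ Iic i, k j ≤ ∑ j, k j := sum_le_sum_of_subset (subset_univ _)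
  omega

lemma wordCoeff_commaSet_snoc_one (k : Fin (m + 1) → ℕ) :
    wordCoeff N f (commaSet (Fin.snoc k 1 : Fin (m + 2) → ℕ)) (∑ i, k i + 1) =
      divByIndex (tailSum N (wordCoeff N f (commaSet k) (∑ i, k i))) := by
  rw [commaSet_snoc k one_pos, image_sum_Iic_eq_insert_commaSet, wordCoeff,
    if_pos (mem_insert_self _ _), wordCoeff_congr (S' := commaSet k) fun x hx => by simp [hx.ne]]

end CommaSet

section DecTuples

variable {M : Type*} [AddCommMonoid M] {m N : ℕ}

lemma mem_decTuples {p : Fin m → ℕ} :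
    p ∈ decTuples m N ↔ (∀ i, p i ∈ Icc 1 N) ∧ Antitone p := by
  simp only [decTuples, mem_filter, Fintype.mem_piFinset, Antitone]

lemma snoc_mem_decTuples_iff {q : Fin (m + 1) → ℕ} {a : ℕ} :
    (Fin.snoc q a : Fin (m + 2) → ℕ) ∈ decTuples (m + 2) N ↔
      q ∈ decTuples (m + 1) N ∧ a ∈ Icc 1 (q (Fin.last m)) := by
  simp only [mem_decTuples, Fin.forall_fin_succ', Fin.snoc_castSucc, Fin.snoc_last,
    Fin.antitone_iff_succ_le (n := m + 1), Fin.antitone_iff_succ_le (n := m), mem_Icc,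
    Fin.succ_castSucc, Fin.succ_last]
  constructor
  · rintro ⟨⟨hq, ha1, -⟩, hanti, hlast⟩
    exact ⟨⟨hq, hanti⟩, ha1, hlast⟩
  · rintro ⟨⟨hq, hanti⟩, ha1, hlast⟩
    exact ⟨⟨hq, ha1, hlast.trans hq.2.2⟩, hanti, hlast⟩

lemma sum_decTuples_add_two (F : (Fin (m + 2) → ℕ) → M) :
    ∑ p ∈ decTuples (m + 2) N, F p =
      ∑ q ∈ decTuples (m + 1) N, ∑ a ∈ Icc 1 (q (Fin.last m)), F (Fin.snoc q a) := by
  rw [sum_sigma']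
  refine sum_nbij' (fun p => ⟨Fin.init p, p (Fin.last _)⟩) (fun x => Fin.snoc x.1 x.2)
    ?_ ?_ ?_ ?_ ?_
  · intro p hp
    rw [← Fin.snoc_init_self p, snoc_mem_decTuples_iff] at hp
    simpa [mem_sigma] using hp
  · rintro ⟨q, a⟩ h
    exact snoc_mem_decTuples_iff.2 (mem_sigma.1 h)
  · intro p _
    exact Fin.snoc_init_self p
  · rintro ⟨q, a⟩ _
    simp
  · intro p _
    rw [Fin.snoc_init_self]

lemma sum_decTuples_one (F : (Fin 1 → ℕ) → M) :
    ∑ p ∈ decTuples 1 N, F p = ∑ a ∈ Icc 1 N, F fun _ => a := by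
  refine sum_nbij' (fun p => p 0) (fun a _ => a) ?_ ?_ ?_ ?_ ?_
  · intro p hp
    exact (mem_decTuples.1 hp).1 0
  · intro a ha
    exact mem_decTuples.2 ⟨fun _ => ha, fun _ _ _ => le_rfl⟩
  · intro p _
    funext i
    rw [Subsingleton.elim i 0]
  · intro a _
    rfl
  · intro p _
    congr
    funext i
    rw [Subsingleton.elim i 0]

end DecTuples

section NestedSum

variable {M : Type*} [AddCommMonoid M] [Module ℚ M] (N : ℕ) (f : ℕ → ℚ)

/-- Testing against an arbitrary `g` (instead of `t ^ n_m`) is what lets the induction absorb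
the innermost summation into `g` when the last entry of the index is removed. -/
def nestedSum {m : ℕ} (k : Fin (m + 1) → ℕ) (g : ℕ → M) : M :=
  ∑ p ∈ decTuples (m + 1) N, (f (p 0) / ∏ i, (p i : ℚ) ^ k i) • g (p (Fin.last m))

variable {N f}

lemma nestedSum_snoc_succ {m : ℕ} (k : Fin m → ℕ) (c : ℕ) (g : ℕ → M) :
    nestedSum N f (Fin.snoc k (c + 1)) g =
      nestedSum N f (Fin.snoc k c) fun n => (n : ℚ)⁻¹ • g n := by
  refine sum_congr rfl fun p _ => ?_
  rw [smul_smul, Fin.prod_univ_castSucc, Fin.prod_univ_castSucc]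
  simp only [Fin.snoc_castSucc, Fin.snoc_last, pow_succ]
  congr 1
  ring

lemma nestedSum_snoc_one {m : ℕ} (k : Fin (m + 1) → ℕ) (g : ℕ → M) :
    nestedSum N f (Fin.snoc k 1) g =
      nestedSum N f k fun j => ∑ n ∈ Icc 1 j, (n : ℚ)⁻¹ • g n := by
  unfold nestedSum
  rw [sum_decTuples_add_two]
  refine sum_congr rfl fun q _ => ?_
  rw [smul_sum]
  refine sum_congr rfl fun a _ => ?_
  rw [smul_smul, Fin.prod_univ_castSucc, ← Fin.castSucc_zero]
  simp only [Fin.snoc_castSucc, Fin.snoc_last, pow_one]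
  congr 1
  ring

lemma nestedSum_const_one (g : ℕ → M) :
    nestedSum N f (fun _ : Fin 1 => 1) g = ∑ n ∈ Icc 1 N, divByIndex f n • g n := by
  unfold nestedSum
  rw [sum_decTuples_one]
  simp [divByIndex, div_eq_inv_mul]

lemma sum_smul_sum_Icc_inv_smul (a : ℕ → ℚ) (g : ℕ → M) :
    ∑ j ∈ Icc 1 N, a j • ∑ n ∈ Icc 1 j, (n : ℚ)⁻¹ • g n =
      ∑ n ∈ Icc 1 N, divByIndex (tailSum N a) n • g n := by
  simp only [divByIndex, tailSum, smul_sum, mul_sum, sum_smul, smul_smul]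
  rw [sum_Icc_sum_Icc_comm]
  simp only [mul_comm]

lemma nestedSum_snoc_eq_sum_wordCoeff {m : ℕ} (k : Fin m → ℕ)
    (hone : ∀ g : ℕ → M, nestedSum N f (Fin.snoc k 1) g =
      ∑ n ∈ Icc 1 N,
        wordCoeff N f (commaSet (Fin.snoc k 1 : Fin (m + 1) → ℕ)) (∑ i, k i + 1) n • g n)
    {c : ℕ} (hc : 0 < c) (g : ℕ → M) :
    nestedSum N f (Fin.snoc k c) g =
      ∑ n ∈ Icc 1 N,
        wordCoeff N f (commaSet (Fin.snoc k c : Fin (m + 1) → ℕ)) (∑ i, k i + c) n •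
          g n := by
  induction c, hc using Nat.le_induction generalizing g with
  | base => exact hone g
  | succ c hc ih =>
    rw [nestedSum_snoc_succ, ih, wordCoeff_commaSet_snoc_succ k hc]
    simp only [divByIndex, smul_smul, mul_comm]

theorem nestedSum_eq_sum_wordCoeff {m : ℕ} (k : Fin (m + 1) → ℕ) (hk : ∀ i, 0 < k i)
    (g : ℕ → M) :
    nestedSum N f k g = ∑ n ∈ Icc 1 N, wordCoeff N f (commaSet k) (∑ i, k i) n • g n := by
  induction m generalizing g with
  | zero =>
    cases k using Fin.snocCases with
    | snoc k c =>
      have hc : 0 < c := by simpa only [Fin.snoc_last] using hk (Fin.last 0)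
      rw [Fin.sum_snoc]
      refine nestedSum_snoc_eq_sum_wordCoeff k (fun g => ?_) hc g
      rw [Fin.snoc_zero, nestedSum_const_one]
      simp [commaSet, wordCoeff]
  | succ m ih =>
    cases k using Fin.snocCases with
    | snoc k c =>
      have hc : 0 < c := by simpa only [Fin.snoc_last] using hk (Fin.last _)
      rw [Fin.sum_snoc]
      refine nestedSum_snoc_eq_sum_wordCoeff k (fun g => ?_) hc g
      rw [nestedSum_snoc_one, ih k (fun i => by simpa using hk i.castSucc),
        wordCoeff_commaSet_snoc_one, sum_smul_sum_Icc_inv_smul]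

end NestedSum

lemma one_sub_X_pow_sub_one (j : ℕ) :
    (1 - X : ℚ[X]) ^ j - 1 = ∑ n ∈ Icc 1 j, ((-1) ^ n * j.choose n : ℚ) • X ^ n := by
  have hexpand :
      (1 - X : ℚ[X]) ^ j = ∑ n ∈ range (j + 1), ((-1) ^ n * j.choose n : ℚ) • X ^ n := by
    rw [sub_eq_neg_add, add_pow]
    refine sum_congr rfl fun n _ => ?_
    rw [smul_eq_C_mul, one_pow, mul_one, neg_pow, map_mul, map_pow, map_neg, map_one,
      map_natCast]
    ring
  rw [hexpand, range_eq_Ico, ← Ico_add_one_right_eq_Icc, sum_eq_sum_Ico_succ_bot j.succ_pos]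
  simp

lemma sum_binomialTransform_smul_X_pow {N : ℕ} (b : ℕ → ℚ) :
    ∑ n ∈ Icc 1 N, binomialTransform N b n • (X : ℚ[X]) ^ n =
      ∑ j ∈ Icc 1 N, b j • ((1 - X) ^ j - 1) := by
  simp only [one_sub_X_pow_sub_one, binomialTransform, smul_sum, smul_smul, mul_sum, sum_smul]
  rw [← sum_Icc_sum_Icc_comm]
  refine sum_congr rfl fun n _ => sum_congr rfl fun j _ => ?_
  congr 1
  ring

/-- Dilcher-type identity (Sakugawa–Seki): for an index `𝕜 = (k_1, …, k_m)` with Hoffman dual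
`𝕜^∨ = (k'_1, …, k'_{m'})` (characterized by: the comma set of `𝕜^∨` is the complement of the
comma set of `𝕜` in `{1, …, wt(𝕜) - 1}`) and a positive integer `N`, the polynomial identity
`∑_{N ≥ n_1 ≥ ⋯ ≥ n_m ≥ 1} (-1)^{n_1} C(N, n_1) t^{n_m}/(n_1^{k_1} ⋯ n_m^{k_m})
  = ∑_{N ≥ n_1 ≥ ⋯ ≥ n_{m'} ≥ 1} ((1-t)^{n_{m'}} - 1)/(n_1^{k'_1} ⋯ n_{m'}^{k'_{m'}})`
holds in `ℚ[t]`. -/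
theorem dilcher_type_identity (m m' N : ℕ) (hm : 0 < m) (hm' : 0 < m')
    (k : Fin m → ℕ) (k' : Fin m' → ℕ) (hk : ∀ i, 0 < k i) (hk' : ∀ i, 0 < k' i)
    (hwt : ∑ i, k' i = ∑ i, k i)
    (hdual : ∀ x : ℕ, x ∈ commaSet k' ↔ (0 < x ∧ x < ∑ i, k i ∧ x ∉ commaSet k)) :
    ∑ n ∈ decTuples m N,
        C ((-1 : ℚ) ^ (n ⟨0, hm⟩) * (N.choose (n ⟨0, hm⟩) : ℚ) / ∏ i, (n i : ℚ) ^ (k i))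
          * X ^ (n ⟨m - 1, by omega⟩)
      = ∑ n ∈ decTuples m' N,
          C ((1 : ℚ) / ∏ i, (n i : ℚ) ^ (k' i))
            * ((1 - X) ^ (n ⟨m' - 1, by omega⟩) - 1) := by
  obtain ⟨m, rfl⟩ : ∃ m₀, m = m₀ + 1 := ⟨m - 1, by omega⟩
  obtain ⟨m', rfl⟩ : ∃ m₀, m' = m₀ + 1 := ⟨m' - 1, by omega⟩
  simp only [← smul_eq_C_mul]
  change nestedSum N (fun j => (-1) ^ j * (N.choose j : ℚ)) k (X ^ ·) =
    nestedSum N (fun _ => 1) k' fun j => (1 - X) ^ j - 1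
  have hw : 0 < ∑ i, k i := (hk 0).trans_le (single_le_sum (fun i _ => (hk i).le) (mem_univ 0))
  rw [nestedSum_eq_sum_wordCoeff k hk, nestedSum_eq_sum_wordCoeff k' hk', hwt,
    ← sum_binomialTransform_smul_X_pow]
  refine sum_congr rfl fun n hn => ?_
  rw [wordCoeff_eqOn_binomialTransform hw (zero_notMem_commaSet hk) (zero_notMem_commaSet hk')
    (fun x hx hxw => by simp [hdual x, hx, hxw]) (by simpa using hn)]
end

section
/- (Dilcher's identity) For positive integers N, m and $1 \le l \le N$: $\sum_{j=1}^{l} \binom{l}{j} \frac{(-1)^{j-1}}{j^{m}} = \sum_{l \geq n_1 \geq \cdots \geq n_{m} \geq 1} \frac{1}{n_1 \cdots n_{m}}$, an identity of rational numbers. -/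
/-!
Both sides, as functions `S m l`, satisfy `S 0 l = 1` for `l ≥ 1` and
`S (m + 1) l = ∑_{k=1}^{l} S m k / k`. For the tuple sum this is splitting off the largest
entry `n_1 = k`. For the binomial sum, Pascal's rule and `C(l, j-1) / j = C(l+1, j) / (l+1)` give
the telescoping step `S (m+1) (l+1) - S (m+1) l = S m (l+1) / (l+1)`, and `S 0 l = 1` is the
vanishing of the alternating sum of a row of Pascal's triangle.
-/

open Finset

namespace Dilcher

lemma sum_Icc_one_eq_sum_range {M : Type*} [AddCommMonoid M] (f : ℕ → M) (l : ℕ) :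
    ∑ j ∈ Icc 1 l, f j = ∑ i ∈ range l, f (i + 1) := by
  rw [range_eq_Ico, sum_Ico_add' f 0 l 1, zero_add]
  rfl

def altChooseSum (m l : ℕ) : ℚ :=
  ∑ j ∈ Icc 1 l, (l.choose j : ℚ) * (-1) ^ (j - 1) / (j : ℚ) ^ m

lemma altChooseSum_eq_sum_range (m l : ℕ) :
    altChooseSum m l = ∑ i ∈ range l, (l.choose (i + 1) : ℚ) * (-1) ^ i / ((i : ℚ) + 1) ^ m := by
  simp [altChooseSum, sum_Icc_one_eq_sum_range]

lemma altChooseSum_zero_left {l : ℕ} (hl : 1 ≤ l) : altChooseSum 0 l = 1 := by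
  have h : ∑ i ∈ range (l + 1), ((-1) ^ i * l.choose i : ℚ) = 0 := by
    exact_mod_cast Int.alternating_sum_range_choose_of_ne (n := l) (by omega)
  rw [sum_range_succ'] at h
  simp only [pow_zero, one_mul, Nat.choose_zero_right, Nat.cast_one] at h
  rw [altChooseSum_eq_sum_range]
  simp only [pow_zero, div_one]
  have h' : ∑ i ∈ range l, (l.choose (i + 1) : ℚ) * (-1) ^ i
      = -∑ i ∈ range l, (-1) ^ (i + 1) * (l.choose (i + 1) : ℚ) := by
    rw [← sum_neg_distrib]
    exact sum_congr rfl fun i _ => by ring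
  linarith

lemma altChooseSum_succ_succ (m l : ℕ) :
    altChooseSum (m + 1) (l + 1) = altChooseSum (m + 1) l + altChooseSum m (l + 1) / (l + 1) := by
  have h₁ : altChooseSum (m + 1) l
      = ∑ i ∈ range (l + 1), (l.choose (i + 1) : ℚ) * (-1) ^ i / ((i : ℚ) + 1) ^ (m + 1) := by
    simp [altChooseSum_eq_sum_range, sum_range_succ]
  have h₂ : altChooseSum m (l + 1) / (l + 1)
      = ∑ i ∈ range (l + 1), (l.choose i : ℚ) * (-1) ^ i / ((i : ℚ) + 1) ^ (m + 1) := by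
    rw [altChooseSum_eq_sum_range, sum_div]
    refine sum_congr rfl fun i _ => ?_
    have h : ((l + 1).choose (i + 1) : ℚ) = (l + 1) * l.choose i / (i + 1) := by
      rw [eq_div_iff (by positivity)]
      exact_mod_cast (Nat.add_one_mul_choose_eq l i).symm
    rw [h]
    field_simp
    ring
  rw [h₁, h₂, ← sum_add_distrib, altChooseSum_eq_sum_range]
  refine sum_congr rfl fun i _ => ?_
  rw [Nat.choose_succ_succ']
  push_cast
  ring

lemma altChooseSum_succ (m l : ℕ) :
    altChooseSum (m + 1) l = ∑ k ∈ Icc 1 l, altChooseSum m k / k := by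
  induction l with
  | zero => simp [altChooseSum]
  | succ l ih =>
    rw [sum_Icc_succ_top (by omega), ← ih, altChooseSum_succ_succ]
    push_cast
    rfl

lemma mem_decTuples {m N : ℕ} {n : Fin m → ℕ} :
    n ∈ decTuples m N ↔ (∀ i, n i ∈ Icc 1 N) ∧ ∀ i j : Fin m, i ≤ j → n j ≤ n i := by
  simp [decTuples, Fintype.mem_piFinset]

lemma cons_mem_decTuples_succ {m l k : ℕ} {n : Fin m → ℕ} :
    (Fin.cons k n : Fin (m + 1) → ℕ) ∈ decTuples (m + 1) l ↔ k ∈ Icc 1 l ∧ n ∈ decTuples m k := by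
  simp only [mem_decTuples, Fin.forall_fin_succ, Fin.cons_zero, Fin.cons_succ, mem_Icc,
    Fin.succ_le_succ_iff, Fin.zero_le, Fin.le_zero_iff, Fin.succ_ne_zero, le_refl, forall_const,
    IsEmpty.forall_iff, true_and]
  constructor
  · rintro ⟨⟨hk, hn⟩, hnk, hanti⟩
    exact ⟨hk, fun i => ⟨(hn i).1, hnk i⟩, hanti⟩
  · rintro ⟨hk, hn, hanti⟩
    exact ⟨⟨hk, fun i => ⟨(hn i).1, (hn i).2.trans hk.2⟩⟩, fun i => (hn i).2, hanti⟩

lemma sum_decTuples_succ {M : Type*} [AddCommMonoid M] (m l : ℕ) (f : (Fin (m + 1) → ℕ) → M) :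
    ∑ n ∈ decTuples (m + 1) l, f n = ∑ k ∈ Icc 1 l, ∑ n ∈ decTuples m k, f (Fin.cons k n) := by
  rw [← sum_sigma (Icc 1 l) (decTuples m) fun p => f (Fin.cons p.1 p.2)]
  refine sum_bij' (fun n _ => ⟨n 0, Fin.tail n⟩) (fun p _ => Fin.cons p.1 p.2) ?_ ?_ ?_ ?_ ?_
  · intro n hn
    rw [← Fin.cons_self_tail n, cons_mem_decTuples_succ] at hn
    exact mem_sigma.2 hn
  · rintro ⟨k, n⟩ hp
    exact cons_mem_decTuples_succ.2 (mem_sigma.1 hp)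
  · intro n _
    exact Fin.cons_self_tail n
  · rintro ⟨k, n⟩ _
    simp
  · intro n _
    rw [Fin.cons_self_tail]

def invProdSum (m l : ℕ) : ℚ :=
  ∑ n ∈ decTuples m l, 1 / ∏ i, (n i : ℚ)

lemma invProdSum_zero (l : ℕ) : invProdSum 0 l = 1 := by
  simp [invProdSum, decTuples]

lemma invProdSum_succ (m l : ℕ) :
    invProdSum (m + 1) l = ∑ k ∈ Icc 1 l, invProdSum m k / k := by
  rw [invProdSum, sum_decTuples_succ]
  refine sum_congr rfl fun k _ => ?_
  simp only [invProdSum, sum_div, Fin.prod_univ_succ, Fin.cons_zero, Fin.cons_succ, div_div]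
  exact sum_congr rfl fun n _ => by rw [mul_comm]

theorem altChooseSum_eq_invProdSum (m : ℕ) {l : ℕ} (hl : 1 ≤ l) :
    altChooseSum m l = invProdSum m l := by
  induction m generalizing l with
  | zero => rw [altChooseSum_zero_left hl, invProdSum_zero]
  | succ m ih =>
    rw [altChooseSum_succ, invProdSum_succ]
    exact sum_congr rfl fun k hk => by rw [ih (mem_Icc.1 hk).1]

end Dilcher

theorem dilcher_identity_general (l m : ℕ) (hl1 : 1 ≤ l) :
    ∑ j ∈ Finset.Icc 1 l, (l.choose j : ℚ) * (-1) ^ (j - 1) / (j : ℚ) ^ m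
      = ∑ n ∈ decTuples m l, 1 / ∏ i, (n i : ℚ) :=
  Dilcher.altChooseSum_eq_invProdSum m hl1

/-- Dilcher's identity: for positive integers `N`, `m` and `1 ≤ l ≤ N`,
`∑_{j=1}^{l} C(l,j) (-1)^(j-1) / j^m = ∑_{l ≥ n_1 ≥ ⋯ ≥ n_m ≥ 1} 1/(n_1 ⋯ n_m)` in `ℚ`. -/
theorem dilcher_identity (N l m : ℕ) (hN : 0 < N) (hm : 0 < m) (hl1 : 1 ≤ l) (hlN : l ≤ N) :
    ∑ j ∈ Finset.Icc 1 l, (l.choose j : ℚ) * (-1) ^ (j - 1) / (j : ℚ) ^ m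
      = ∑ n ∈ decTuples m l, 1 / ∏ i, (n i : ℚ) :=
  dilcher_identity_general l m hl1
end

section
/- Let p be a prime and $\Bbbk$ an index with Hoffman dual $\Bbbk^\vee$. Then $\widetilde{\text{£}}^{\star}_{p, \Bbbk}(t) \equiv \widetilde{\text{£}}^{\star}_{p, \Bbbk^{\vee}}(1-t) - \zeta^{\star}_p(\Bbbk^\vee) \pmod{p}$, as polynomials in $\mathbb{Z}_{(p)}[t]$ with coefficients compared modulo p. -/
open Polynomial

/-- `c ∈ p ℤ_(p)`. -/
def InPZp (p : ℕ) (c : ℚ) : Prop :=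
  ∃ a b : ℤ, ¬ (p : ℤ) ∣ b ∧ (b : ℚ) * c = (p : ℚ) * (a : ℚ)

/-- The one-variable finite star-multiple polylogarithm
`£̃^⋆_{p,𝕜}(t) = ∑_{p-1 ≥ n_1 ≥ ⋯ ≥ n_m ≥ 1} t^{n_m}/(n_1^{k_1} ⋯ n_m^{k_m})`,
as a polynomial over `ℚ` (its coefficients lie in `ℤ_(p)`). -/
noncomputable def LstarTilde (p m : ℕ) (hm : 0 < m) (k : Fin m → ℕ) : Polynomial ℚ :=
  ∑ n ∈ decTuples m (p - 1),
    C ((1 : ℚ) / ∏ i, (n i : ℚ) ^ (k i)) * X ^ (n ⟨m - 1, by omega⟩)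

/-!
Write an index of weight `K` as a word of length `K - 1` in the letters `+` (`true`) and `,`
(`false`); Hoffman duality exchanges the two letters. Over a field of characteristic `p` the
polynomials `£̃⋆` of words satisfy `t · d/dt £̃_{w+} = £̃_w` and
`(t - 1) · d/dt £̃_{w,} = £̃_w - £̃_w(1)`, and the substitution `t ↦ 1 - t` turns one operator into
the other. Since a polynomial of degree `< p` is determined by its derivative and its value at `0`,
induction on the word gives `£̃_w(t) = £̃_{w^∨}(1 - t) - £̃_{w^∨}(1)` in `𝔽_p[t]`; for the empty
word this is Frobenius, `(1 - t)^p = 1 - t^p`. The congruence over `ℚ` is this identity for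
polynomials over the `p`-integral rationals, reduced modulo `p`.
-/

namespace StarPolylog

open Finset

section Reflect

variable {R : Type*} [CommRing R]

noncomputable def oneSubReflect (g : R[X]) : R[X] := g.comp (1 - X) - C (g.eval 1)

@[simp] lemma eval_zero_oneSubReflect (g : R[X]) : (oneSubReflect g).eval 0 = 0 := by
  simp [oneSubReflect]

lemma eq_oneSubReflect_symm {f g : R[X]} (hg : g.eval 0 = 0) (h : f = oneSubReflect g) :
    g = oneSubReflect f := by
  have hcomp : (1 - X : R[X]).comp (1 - X) = X := by simp
  subst h
  simp [oneSubReflect, sub_comp, comp_assoc, hcomp, hg]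

lemma derivative_oneSubReflect (g : R[X]) :
    derivative (oneSubReflect g) = -(derivative g).comp (1 - X) := by
  simp [oneSubReflect, derivative_comp]

lemma X_mul_derivative_oneSubReflect (g : R[X]) :
    X * derivative (oneSubReflect g) = ((X - 1) * derivative g).comp (1 - X) := by
  simp only [derivative_oneSubReflect, mul_comp, sub_comp, X_comp, one_comp]
  ring

lemma natDegree_oneSubReflect_le (g : R[X]) : (oneSubReflect g).natDegree ≤ g.natDegree := by
  rw [oneSubReflect, natDegree_sub_C]
  refine natDegree_comp_le.trans (le_of_le_of_eq (Nat.mul_le_mul_left _ ?_) (mul_one _))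
  exact (natDegree_sub_le _ _).trans (by simp [natDegree_X_le])

lemma map_oneSubReflect {S : Type*} [CommRing S] (f : R →+* S) (g : R[X]) :
    (oneSubReflect g).map f = oneSubReflect (g.map f) := by
  simp [oneSubReflect, map_comp, eval_map, eval₂_at_one]

end Reflect

section CharP

variable {F : Type*} [Field F] (p : ℕ) [CharP F p]

lemma natCast_ne_zero_of_lt {n : ℕ} (h0 : n ≠ 0) (hn : n < p) : (n : F) ≠ 0 := by
  rw [Ne, CharP.cast_eq_zero_iff F p]
  exact fun h => h0 (Nat.eq_zero_of_dvd_of_lt h hn)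

lemma eq_of_derivative_eq {f g : F[X]} (hf : f.natDegree < p) (hg : g.natDegree < p)
    (h0 : f.eval 0 = g.eval 0) (hd : derivative f = derivative g) : f = g := by
  ext (_ | e)
  · simpa [coeff_zero_eq_eval_zero] using h0
  · have hcoeff := congrArg (coeff · e) hd
    simp only [coeff_derivative] at hcoeff
    by_cases he : e + 1 < p
    · have := natCast_ne_zero_of_lt (F := F) p (Nat.succ_ne_zero e) he
      push_cast at this
      exact mul_right_cancel₀ this hcoeff
    · rw [coeff_eq_zero_of_natDegree_lt (by omega), coeff_eq_zero_of_natDegree_lt (by omega)]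

lemma eq_oneSubReflect_of_mul_derivative {f g q : F[X]} (hf : f.natDegree < p)
    (hg : g.natDegree < p) (hf0 : f.eval 0 = 0) (hq : q ≠ 0)
    (hd : q * derivative f = q * derivative (oneSubReflect g)) : f = oneSubReflect g :=
  eq_of_derivative_eq p hf ((natDegree_oneSubReflect_le g).trans_lt hg) (by simp [hf0])
    (mul_left_cancel₀ hq hd)

end CharP

section Words

variable {F : Type*} [Field F]

/-- A letter `true` is a `+` (the summation variable is repeated, raising its exponent) and a
letter `false` is a `,` (a new summation variable `j ≤ n` starts); `starWordPoly w N` is `£̃⋆` of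
the index of the word `w`, with `N` in place of `p - 1`. -/
noncomputable def starWordTerm : List Bool → ℕ → F[X]
  | [], n => C (n : F)⁻¹ * X ^ n
  | true :: w, n => C (n : F)⁻¹ * starWordTerm w n
  | false :: w, n => C (n : F)⁻¹ * ∑ j ∈ Icc 1 n, starWordTerm w j

noncomputable def starWordPoly (w : List Bool) (N : ℕ) : F[X] :=
  ∑ n ∈ Icc 1 N, starWordTerm w n

lemma starWordTerm_nil (n : ℕ) : (starWordTerm [] n : F[X]) = C (n : F)⁻¹ * X ^ n := rfl

lemma starWordTerm_true_cons (w : List Bool) (n : ℕ) :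
    (starWordTerm (true :: w) n : F[X]) = C (n : F)⁻¹ * starWordTerm w n := rfl

lemma starWordTerm_false_cons (w : List Bool) (n : ℕ) :
    (starWordTerm (false :: w) n : F[X]) = C (n : F)⁻¹ * starWordPoly w n := rfl

lemma starWordTerm_replicate_true_append (e : ℕ) (w : List Bool) (n : ℕ) :
    (starWordTerm (List.replicate e true ++ w) n : F[X])
      = C ((n : F)⁻¹ ^ e) * starWordTerm w n := by
  induction e with
  | zero => simp
  | succ e ih =>
    rw [List.replicate_succ, List.cons_append, starWordTerm, ih, pow_succ', C_mul, mul_assoc]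

lemma eval_zero_starWordTerm :
    ∀ (w : List Bool) {n : ℕ}, n ≠ 0 → (starWordTerm w n : F[X]).eval 0 = 0
  | [], n, hn => by simp [starWordTerm, hn]
  | true :: w, n, hn => by simp [starWordTerm, eval_zero_starWordTerm w hn]
  | false :: w, _, _ => by
    simp only [starWordTerm, eval_mul, eval_finsetSum]
    rw [sum_eq_zero fun j hj => eval_zero_starWordTerm w (by simp at hj; omega), mul_zero]

lemma natDegree_starWordTerm_le :
    ∀ (w : List Bool) (n : ℕ), (starWordTerm w n : F[X]).natDegree ≤ n
  | [], n => (natDegree_C_mul_le _ _).trans (natDegree_X_pow_le n)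
  | true :: w, n => (natDegree_C_mul_le _ _).trans (natDegree_starWordTerm_le w n)
  | false :: w, _ => (natDegree_C_mul_le _ _).trans <| natDegree_sum_le_of_forall_le _ _
      fun j hj => (natDegree_starWordTerm_le w j).trans (mem_Icc.mp hj).2

lemma eval_zero_starWordPoly (w : List Bool) (N : ℕ) :
    (starWordPoly w N : F[X]).eval 0 = 0 := by
  rw [starWordPoly, eval_finsetSum]
  exact sum_eq_zero fun n hn => eval_zero_starWordTerm w (by simp at hn; omega)

lemma natDegree_starWordPoly_lt {p : ℕ} (hp : 0 < p) (w : List Bool) :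
    (starWordPoly w (p - 1) : F[X]).natDegree < p :=
  (natDegree_sum_le_of_forall_le _ _ fun n hn =>
    (natDegree_starWordTerm_le w n).trans (mem_Icc.mp hn).2).trans_lt (Nat.sub_lt hp one_pos)

lemma map_starWordPoly_append (Φ Ψ : F[X] →ₗ[F] F[X]) (b : Bool) {N : ℕ}
    (hbase : ∀ n ∈ Icc 1 N, Φ (starWordTerm [b] n) = Ψ (starWordTerm [] n)) (w : List Bool) :
    Φ (starWordPoly (w ++ [b]) N) = Ψ (starWordPoly w N) := by
  suffices hterm : ∀ n ∈ Icc 1 N, Φ (starWordTerm (w ++ [b]) n) = Ψ (starWordTerm w n) by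
    simp only [starWordPoly, map_sum]
    exact sum_congr rfl hterm
  induction w with
  | nil => exact hbase
  | cons c w ih =>
    intro n hn
    cases c
    · have hsub : ∀ j ∈ Icc 1 n, Φ (starWordTerm (w ++ [b]) j) = Ψ (starWordTerm w j) :=
        fun j hj => ih j (by simp at hn hj ⊢; omega)
      simp only [List.cons_append, starWordTerm, ← smul_eq_C_mul, map_smul, map_sum,
        sum_congr rfl hsub]
    · simp only [List.cons_append, starWordTerm, ← smul_eq_C_mul, map_smul, ih n hn]

end Words

section Derivative

variable {F : Type*} [Field F] (p : ℕ) [CharP F p]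

lemma derivative_starWordTerm_nil {n : ℕ} (hn : n ∈ Icc 1 (p - 1)) :
    derivative (starWordTerm [] n : F[X]) = X ^ (n - 1) := by
  have hn0 : (n : F) ≠ 0 := natCast_ne_zero_of_lt p (by simp at hn; omega) (by simp at hn; omega)
  rw [starWordTerm, derivative_C_mul_X_pow, inv_mul_cancel₀ hn0, C_1, one_mul]

lemma sub_one_mul_derivative_starWordPoly_nil {N : ℕ} (hN : N ≤ p - 1) :
    (X - 1) * derivative (starWordPoly [] N : F[X]) = X ^ N - 1 := by
  induction N with
  | zero => simp [starWordPoly]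
  | succ N ih =>
    have hN1 : N + 1 ∈ Icc 1 (p - 1) := by simp; omega
    rw [starWordPoly, sum_Icc_succ_top (by omega), ← starWordPoly, derivative_add, mul_add,
      ih (by omega), derivative_starWordTerm_nil p hN1, Nat.add_sub_cancel, pow_succ]
    ring

lemma X_mul_derivative_starWordPoly_append_true (w : List Bool) :
    X * derivative (starWordPoly (w ++ [true]) (p - 1) : F[X]) = starWordPoly w (p - 1) := by
  refine map_starWordPoly_append (LinearMap.mulLeft F X ∘ₗ derivative) LinearMap.id true
    (fun n hn => ?_) w
  simp only [LinearMap.comp_apply, LinearMap.mulLeft_apply, LinearMap.id_apply,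
    starWordTerm_true_cons, derivative_C_mul]
  rw [mul_left_comm, derivative_starWordTerm_nil p hn,
    mul_pow_sub_one (by simp at hn; omega), starWordTerm_nil]

lemma sub_one_mul_derivative_starWordPoly_append_false (w : List Bool) :
    (X - 1) * derivative (starWordPoly (w ++ [false]) (p - 1) : F[X])
      = starWordPoly w (p - 1) - C ((starWordPoly w (p - 1)).eval 1) := by
  have key := map_starWordPoly_append (LinearMap.mulLeft F (X - 1) ∘ₗ derivative)
    (LinearMap.id - (monomial 0 : F →ₗ[F] F[X]) ∘ₗ leval (1 : F)) false (N := p - 1) ?_ w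
  · simpa using key
  intro n hn
  simp only [LinearMap.comp_apply, LinearMap.mulLeft_apply, LinearMap.sub_apply,
    LinearMap.id_apply, leval_apply, monomial_zero_left, starWordTerm_false_cons,
    derivative_C_mul]
  rw [mul_left_comm, sub_one_mul_derivative_starWordPoly_nil p (mem_Icc.mp hn).2,
    starWordTerm_nil]
  simp [mul_sub]

variable [Fact p.Prime]

lemma starWordPoly_nil_eq_oneSubReflect :
    (starWordPoly [] (p - 1) : F[X]) = oneSubReflect (starWordPoly [] (p - 1)) := by
  set f : F[X] := starWordPoly [] (p - 1)
  have hp := (Fact.out : p.Prime).pos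
  have hf := sub_one_mul_derivative_starWordPoly_nil (F := F) p le_rfl
  refine eq_oneSubReflect_of_mul_derivative p (natDegree_starWordPoly_lt hp [])
    (natDegree_starWordPoly_lt hp []) (eval_zero_starWordPoly [] _)
    (mul_ne_zero X_ne_zero (X_sub_C_ne_zero 1)) ?_
  calc X * (X - 1) * derivative f = X ^ p - X := by
        rw [mul_assoc, hf, mul_sub, ← pow_succ', Nat.sub_add_cancel hp, mul_one]
    _ = X * (X - 1) * derivative (oneSubReflect f) := by
        rw [mul_right_comm, X_mul_derivative_oneSubReflect, hf, sub_comp, pow_comp, X_comp,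
          one_comp]
        have hfrob : (1 - X : F[X]) ^ (p - 1) * (1 - X) = 1 - X ^ p := by
          rw [pow_sub_one_mul hp.ne', sub_pow_char, one_pow]
        linear_combination hfrob

lemma starWordPoly_append_true_eq_oneSubReflect {v u : List Bool}
    (h : (starWordPoly v (p - 1) : F[X]) = oneSubReflect (starWordPoly u (p - 1))) :
    (starWordPoly (v ++ [true]) (p - 1) : F[X])
      = oneSubReflect (starWordPoly (u ++ [false]) (p - 1)) := by
  have hp := (Fact.out : p.Prime).pos
  refine eq_oneSubReflect_of_mul_derivative p (natDegree_starWordPoly_lt hp _)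
    (natDegree_starWordPoly_lt hp _) (eval_zero_starWordPoly _ _) X_ne_zero ?_
  rw [X_mul_derivative_starWordPoly_append_true, h, X_mul_derivative_oneSubReflect,
    sub_one_mul_derivative_starWordPoly_append_false, oneSubReflect, sub_comp, C_comp]

theorem starWordPoly_eq_oneSubReflect (w : List Bool) :
    (starWordPoly w (p - 1) : F[X]) = oneSubReflect (starWordPoly (w.map not) (p - 1)) := by
  induction w using List.reverseRecOn with
  | nil => exact starWordPoly_nil_eq_oneSubReflect (F := F) p
  | append_singleton v b ih =>
    rw [List.map_append, List.map_singleton]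
    cases b
    · refine eq_oneSubReflect_symm (eval_zero_starWordPoly _ _) ?_
      refine starWordPoly_append_true_eq_oneSubReflect p ?_
      simpa using eq_oneSubReflect_symm (eval_zero_starWordPoly _ _) ih
    · exact starWordPoly_append_true_eq_oneSubReflect p ih

end Derivative

section CommaSet

lemma sum_Iic_cons {m : ℕ} (a : ℕ) (t : Fin (m + 1) → ℕ) (i : Fin (m + 2)) :
    ∑ j ∈ Iic i, (Fin.cons a t : Fin (m + 2) → ℕ) j
      = a + Fin.cases 0 (fun i => ∑ j ∈ Iic i, t j) i := by
  cases i using Fin.cases <;>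
  simp [← filter_ge_eq_Iic, sum_filter, Fin.sum_univ_succ]

lemma commaSet_cons {m : ℕ} (a : ℕ) (t : Fin (m + 1) → ℕ) (ht : ∑ i, t i ≠ 0) :
    commaSet (Fin.cons a t : Fin (m + 2) → ℕ) = insert a ((commaSet t).image (a + ·)) := by
  ext x
  simp only [commaSet, mem_erase, mem_image, mem_univ, true_and, mem_insert, sum_Iic_cons,
    Fin.sum_cons]
  rw [Fin.exists_fin_succ]
  simp only [Fin.cases_zero, Fin.cases_succ, add_zero]
  constructor
  · rintro ⟨hx, rfl | ⟨i, rfl⟩⟩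
    · exact Or.inl rfl
    · exact Or.inr ⟨_, ⟨fun h => hx (by rw [h]), i, rfl⟩, rfl⟩
  · rintro (rfl | ⟨y, ⟨hy, i, rfl⟩, rfl⟩)
    · exact ⟨by omega, Or.inl rfl⟩
    · exact ⟨by omega, Or.inr ⟨i, rfl⟩⟩

lemma commaSet_of_fin_one (k : Fin 1 → ℕ) : commaSet k = ∅ := by
  have h : Iic (0 : Fin 1) = univ := by decide
  simp [commaSet, h]

def commaWord (K : ℕ) (S : Finset ℕ) : List Bool :=
  (List.range (K - 1)).map fun j => decide (j + 1 ∉ S)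

lemma commaWord_empty (K : ℕ) : commaWord K ∅ = List.replicate (K - 1) true := by
  simp [commaWord, List.map_const']

lemma commaWord_insert_image {a K : ℕ} (ha : a ≠ 0) (hK : K ≠ 0) (S : Finset ℕ) :
    commaWord (a + K) (insert a (S.image (a + ·)))
      = List.replicate (a - 1) true ++ false :: commaWord K S := by
  rw [commaWord, show a + K - 1 = (a - 1) + (K - 1 + 1) by omega, List.range_add,
    List.range_succ_eq_map, List.map_append]
  congr 1
  · refine List.eq_replicate_iff.mpr ⟨by simp, fun b hb => ?_⟩
    simp only [List.mem_map, List.mem_range] at hb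
    obtain ⟨j, hj, rfl⟩ := hb
    simp only [mem_insert, mem_image, decide_eq_true_eq]
    omega
  · simp only [List.map_cons, List.map_map, commaWord]
    congr 1
    · simp; omega
    · refine List.map_congr_left fun j _ => ?_
      simp only [Function.comp_apply, mem_insert, mem_image, Nat.succ_eq_add_one]
      rw [decide_eq_decide, not_iff_not]
      constructor
      · rintro (h | ⟨y, hy, h⟩)
        · omega
        · rwa [show y = j + 1 by omega] at hy
      · exact fun h => Or.inr ⟨j + 1, h, by omega⟩

lemma commaWord_dual {K : ℕ} {S S' : Finset ℕ}
    (hdual : ∀ x : ℕ, x ∈ S' ↔ (0 < x ∧ x < K ∧ x ∉ S)) :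
    commaWord K S' = (commaWord K S).map not := by
  simp only [commaWord, List.map_map]
  refine List.map_congr_left fun j hj => ?_
  simp only [List.mem_range] at hj
  simp [hdual, show 0 < j + 1 by omega, show j + 1 < K by omega]

end CommaSet

section DecTuples

lemma mem_decTuples {m N : ℕ} {n : Fin m → ℕ} :
    n ∈ decTuples m N ↔ (∀ i, n i ∈ Icc 1 N) ∧ Antitone n := by
  simp [decTuples, Fintype.mem_piFinset, Antitone]

lemma antitone_cons {m a : ℕ} {t : Fin m → ℕ} :
    Antitone (Fin.cons a t : Fin (m + 1) → ℕ) ↔ (∀ i, t i ≤ a) ∧ Antitone t := by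
  simpa only [antitone_iff_forall_lt, Relator.LiftFun, ge_iff_le] using
    Fin.liftFun_cons (· ≥ ·) (f := t) (a := a)

lemma cons_mem_decTuples {m N a : ℕ} {t : Fin m → ℕ} :
    (Fin.cons a t : Fin (m + 1) → ℕ) ∈ decTuples (m + 1) N ↔
      a ∈ Icc 1 N ∧ t ∈ decTuples m a := by
  simp only [mem_decTuples, Fin.forall_fin_succ, Fin.cons_zero, Fin.cons_succ, antitone_cons,
    mem_Icc]
  constructor
  · rintro ⟨⟨ha, ht⟩, hle, hanti⟩
    exact ⟨ha, fun i => ⟨(ht i).1, hle i⟩, hanti⟩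
  · rintro ⟨ha, ht, hanti⟩
    exact ⟨⟨ha, fun i => ⟨(ht i).1, (ht i).2.trans ha.2⟩⟩, fun i => (ht i).2, hanti⟩

lemma decTuples_zero (N : ℕ) : decTuples 0 N = {Fin.elim0} := by
  ext n
  simp [mem_decTuples, Subsingleton.elim n Fin.elim0, Antitone]

lemma sum_decTuples_succ {M : Type*} [AddCommMonoid M] (m N : ℕ)
    (f : (Fin (m + 1) → ℕ) → M) :
    ∑ n ∈ decTuples (m + 1) N, f n = ∑ a ∈ Icc 1 N, ∑ t ∈ decTuples m a, f (Fin.cons a t) := by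
  rw [sum_sigma']
  refine sum_nbij' (fun n => ⟨n 0, Fin.tail n⟩) (fun x => Fin.cons x.1 x.2) ?_ ?_ ?_ ?_ ?_
  · intro n hn
    rw [← Fin.cons_self_tail n, cons_mem_decTuples] at hn
    simpa using hn
  · rintro ⟨a, t⟩ h
    simpa [cons_mem_decTuples] using h
  · intro n _
    exact Fin.cons_self_tail n
  · rintro ⟨a, t⟩ _
    simp
  · intro n _
    rw [Fin.cons_self_tail]

end DecTuples

section StarPoly

variable {R : Type*} [CommRing R]

noncomputable def starPoly (w : ℕ → R) {m : ℕ} (k : Fin (m + 1) → ℕ) (N : ℕ) : R[X] :=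
  ∑ n ∈ decTuples (m + 1) N, C (∏ i, w (n i) ^ k i) * X ^ n (Fin.last m)

lemma starPoly_of_fin_one (w : ℕ → R) (k : Fin 1 → ℕ) (N : ℕ) :
    starPoly w k N = ∑ a ∈ Icc 1 N, C (w a ^ k 0) * X ^ a := by
  simp [starPoly, sum_decTuples_succ, decTuples_zero]

lemma starPoly_cons (w : ℕ → R) {m : ℕ} (e : ℕ) (k : Fin (m + 1) → ℕ) (N : ℕ) :
    starPoly w (Fin.cons e k : Fin (m + 2) → ℕ) N
      = ∑ a ∈ Icc 1 N, C (w a ^ e) * starPoly w k a := by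
  rw [starPoly, sum_decTuples_succ]
  simp only [starPoly, mul_sum]
  refine sum_congr rfl fun a _ => sum_congr rfl fun n _ => ?_
  rw [Fin.prod_univ_succ, ← Fin.succ_last]
  simp [mul_assoc]

lemma starPoly_congr {w w' : ℕ → R} {N : ℕ} (h : ∀ n ∈ Icc 1 N, w n = w' n) {m : ℕ}
    (k : Fin (m + 1) → ℕ) : starPoly w k N = starPoly w' k N :=
  sum_congr rfl fun n hn => by
    simp only [prod_congr rfl fun i _ => congrArg (· ^ k i) (h _ ((mem_decTuples.mp hn).1 i))]

lemma map_starPoly {S : Type*} [CommRing S] (f : R →+* S) (w : ℕ → R) {m : ℕ}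
    (k : Fin (m + 1) → ℕ) (N : ℕ) : (starPoly w k N).map f = starPoly (f ∘ w) k N := by
  simp [starPoly, Polynomial.map_sum, Polynomial.map_prod]

end StarPoly

lemma starPoly_inv_eq_starWordPoly {F : Type*} [Field F] {m : ℕ} (k : Fin (m + 1) → ℕ)
    (hk : ∀ i, 0 < k i) (N : ℕ) :
    starPoly (fun n => (n : F)⁻¹) k N
      = starWordPoly (commaWord (∑ i, k i) (commaSet k)) N := by
  induction m generalizing N with
  | zero =>
    rw [starPoly_of_fin_one, commaSet_of_fin_one, commaWord_empty, Fin.sum_univ_one, starWordPoly]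
    refine sum_congr rfl fun a _ => ?_
    rw [← List.append_nil (List.replicate _ true), starWordTerm_replicate_true_append,
      starWordTerm_nil, ← mul_assoc, ← C_mul, pow_sub_one_mul (hk 0).ne']
  | succ m ih =>
    obtain ⟨e, t, rfl⟩ : ∃ e t, k = Fin.cons e t := ⟨k 0, Fin.tail k, (Fin.cons_self_tail k).symm⟩
    have he : e ≠ 0 := (hk 0).ne'
    have ht : ∀ i, 0 < t i := fun i => by simpa using hk i.succ
    have hsum : ∑ i, t i ≠ 0 := (sum_pos (fun i _ => ht i) univ_nonempty).ne'
    rw [starPoly_cons, commaSet_cons e t hsum, Fin.sum_cons, commaWord_insert_image he hsum,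
      starWordPoly]
    refine sum_congr rfl fun a _ => ?_
    rw [starWordTerm_replicate_true_append, starWordTerm_false_cons, ← ih t ht, ← mul_assoc,
      ← C_mul, pow_sub_one_mul he]

section PIntegral

variable (p : ℕ) [Fact p.Prime]

def pIntegral : Subring ℚ where
  carrier := {q | ¬ p ∣ q.den}
  one_mem' := by simpa using (Fact.out : p.Prime).ne_one
  zero_mem' := by simpa using (Fact.out : p.Prime).ne_one
  mul_mem' {q r} hq hr h := by
    rcases (Fact.out : p.Prime).dvd_mul.mp (h.trans (Rat.mul_den_dvd q r)) with h | h
    exacts [hq h, hr h]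
  add_mem' {q r} hq hr h := by
    rcases (Fact.out : p.Prime).dvd_mul.mp (h.trans (Rat.add_den_dvd q r)) with h | h
    exacts [hq h, hr h]
  neg_mem' {q} hq := by simpa using hq

variable {p}

lemma den_cast_ne_zero (x : pIntegral p) : ((x : ℚ).den : ZMod p) ≠ 0 := by
  rw [Ne, ZMod.natCast_eq_zero_iff]
  exact x.2

variable (p)

noncomputable def reduceModP : pIntegral p →+* ZMod p where
  toFun x := ((x : ℚ) : ZMod p)
  map_one' := by simp
  map_zero' := by simp
  map_add' x y := by
    simpa using Rat.cast_add_of_ne_zero (den_cast_ne_zero x) (den_cast_ne_zero y)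
  map_mul' x y := by
    simpa using Rat.cast_mul_of_ne_zero (den_cast_ne_zero x) (den_cast_ne_zero y)

/-- The value `0` at multiples of `p` matches `(0 : ZMod p)⁻¹ = 0`. -/
noncomputable def pInv (n : ℕ) : pIntegral p :=
  if h : p ∣ n then 0 else ⟨(n : ℚ)⁻¹, by
    show ¬ p ∣ ((n : ℚ)⁻¹).den
    rwa [Rat.inv_natCast_den, if_neg (by rintro rfl; exact h (dvd_zero p))]⟩

lemma coe_pInv {n : ℕ} (h : ¬ p ∣ n) : (pInv p n : ℚ) = (n : ℚ)⁻¹ := by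
  rw [pInv, dif_neg h]

lemma reduceModP_pInv (n : ℕ) : reduceModP p (pInv p n) = (n : ZMod p)⁻¹ := by
  by_cases h : p ∣ n
  · simp [pInv, h, (ZMod.natCast_eq_zero_iff n p).mpr h]
  · show ((pInv p n : ℚ) : ZMod p) = _
    have hn : ((n : ℚ).num : ZMod p) ≠ 0 := by
      simpa [ZMod.natCast_eq_zero_iff] using h
    rw [coe_pInv p h, Rat.cast_inv_of_ne_zero hn, Rat.cast_natCast]

lemma inPZp_of_reduceModP_eq_zero {x : pIntegral p} (hx : reduceModP p x = 0) : InPZp p x := by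
  have hx' : ((x : ℚ).num : ZMod p) / ((x : ℚ).den : ZMod p) = 0 :=
    (Rat.cast_def (x : ℚ)).symm.trans hx
  obtain ⟨a, ha⟩ := (ZMod.intCast_zmod_eq_zero_iff_dvd _ p).mp
    ((div_eq_zero_iff.mp hx').resolve_right (den_cast_ne_zero x))
  refine ⟨a, (x : ℚ).den, by exact_mod_cast x.2, ?_⟩
  rw [mul_comm, Int.cast_natCast, Rat.mul_den_eq_num, ha]
  push_cast
  ring

lemma map_reduceModP_starPoly_pInv {m : ℕ} (k : Fin (m + 1) → ℕ) (N : ℕ) :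
    (starPoly (pInv p) k N).map (reduceModP p) = starPoly (fun n => (n : ZMod p)⁻¹) k N := by
  rw [map_starPoly]
  exact congrArg (starPoly · k N) (funext (reduceModP_pInv p))

lemma map_subtype_starPoly_pInv {m : ℕ} (k : Fin (m + 1) → ℕ) :
    (starPoly (pInv p) k (p - 1)).map (pIntegral p).subtype
      = starPoly (fun n => (n : ℚ)⁻¹) k (p - 1) := by
  rw [map_starPoly]
  refine starPoly_congr (fun n hn => coe_pInv p fun h => ?_) k
  rw [mem_Icc] at hn
  exact absurd (Nat.le_of_dvd (by omega) h) (by omega)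

end PIntegral

lemma LstarTilde_eq_starPoly (p : ℕ) {m : ℕ} (hm : 0 < m + 1) (k : Fin (m + 1) → ℕ) :
    LstarTilde p (m + 1) hm k = starPoly (fun n => (n : ℚ)⁻¹) k (p - 1) := by
  simp [LstarTilde, starPoly, Fin.last]

lemma eval_one_LstarTilde (p m : ℕ) (hm : 0 < m) (k : Fin m → ℕ) :
    (LstarTilde p m hm k).eval 1
      = ∑ n ∈ decTuples m (p - 1), (1 : ℚ) / ∏ i, (n i : ℚ) ^ k i := by
  simp [LstarTilde, eval_finsetSum]

end StarPolylog

open StarPolylog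

/-- For a prime `p` and an index `𝕜` with Hoffman dual `𝕜^∨` (characterized via comma sets),
`£̃^⋆_{p,𝕜}(t) ≡ £̃^⋆_{p,𝕜^∨}(1 - t) - ζ^⋆_p(𝕜^∨) (mod p)`, as polynomials in `ℤ_(p)[t]`
with coefficients compared modulo `p`. -/
theorem tilde_hoffman_dual_congr (p m m' : ℕ) (hp : p.Prime) (hm : 0 < m) (hm' : 0 < m')
    (k : Fin m → ℕ) (k' : Fin m' → ℕ) (hk : ∀ i, 0 < k i) (hk' : ∀ i, 0 < k' i)
    (hwt : ∑ i, k' i = ∑ i, k i)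
    (hdual : ∀ x : ℕ, x ∈ commaSet k' ↔ (0 < x ∧ x < ∑ i, k i ∧ x ∉ commaSet k)) :
    ∀ d : ℕ, InPZp p
      ((LstarTilde p m hm k
        - ((LstarTilde p m' hm' k').comp (1 - X)
            - C (∑ n ∈ decTuples m' (p - 1), (1 : ℚ) / ∏ i, (n i : ℚ) ^ (k' i)))).coeff d) := by
  have := Fact.mk hp
  obtain ⟨m, rfl⟩ : ∃ m₀, m = m₀ + 1 := ⟨m - 1, by omega⟩
  obtain ⟨m', rfl⟩ : ∃ m₀, m' = m₀ + 1 := ⟨m' - 1, by omega⟩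
  set E : (pIntegral p)[X] :=
    starPoly (pInv p) k (p - 1) - oneSubReflect (starPoly (pInv p) k' (p - 1))
  have hlift : E.map (pIntegral p).subtype = LstarTilde p _ hm k
      - ((LstarTilde p _ hm' k').comp (1 - X)
        - C (∑ n ∈ decTuples (m' + 1) (p - 1), (1 : ℚ) / ∏ i, (n i : ℚ) ^ (k' i))) := by
    rw [Polynomial.map_sub, map_oneSubReflect, map_subtype_starPoly_pInv,
      map_subtype_starPoly_pInv, ← LstarTilde_eq_starPoly p hm, ← LstarTilde_eq_starPoly p hm',
      oneSubReflect, eval_one_LstarTilde]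
  have hword : commaWord (∑ i, k' i) (commaSet k')
      = (commaWord (∑ i, k i) (commaSet k)).map not := by
    rw [hwt]
    exact commaWord_dual hdual
  have hreduce : E.map (reduceModP p) = 0 := by
    rw [Polynomial.map_sub, map_oneSubReflect, map_reduceModP_starPoly_pInv,
      map_reduceModP_starPoly_pInv, starPoly_inv_eq_starWordPoly k hk,
      starPoly_inv_eq_starWordPoly k' hk', hword, ← starWordPoly_eq_oneSubReflect, sub_self]
  intro d
  rw [← hlift, coeff_map]
  exact inPZp_of_reduceModP_eq_zero p (by rw [← coeff_map, hreduce, coeff_zero])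
end

section
/- Let L be a finite extension of $\mathbb{Q}_p$ with uniformizer $\pi$ and normalized valuation $v_L$ ($v_L(\pi)=1$). Let $x = 1 + \sum_{n \ge n_0} a_n \pi^n$ be a principal unit of L, where each $a_n$ is either 0 or a root of unity in L of order prime to p, and $n_0$ is the minimal positive integer with $a_{n_0} \neq 0$. If $p \nmid n_0$ and $n_0 < v_L(p)$, then x has no p-th root in L. -/
/-!
Write `v` for the `π`-adic valuation. The expansion gives `v(x - 1) = n₀`. If `z ∈ L` had
`z ^ p = x`, then `z` would lie in `O` (which is integrally closed), and the binomial theorem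
gives `z ^ p - 1 ≡ (z - 1) ^ p` modulo `p`, where `v(p) > n₀`. Hence
`p · v(z - 1) = v((z - 1) ^ p) = v(z ^ p - 1) = n₀`, so `p ∣ n₀`.
-/

open Finset

theorem emultiplicity_eq_of_add_of_lt {R : Type*} [Ring R] {π a b : R} {n : ℕ∞}
    (h : emultiplicity π (a + b) = n) (hb : n < emultiplicity π b) :
    emultiplicity π a = n := by
  have hb' : emultiplicity π (a + b) < emultiplicity π (-b) := by rwa [emultiplicity_neg, h]
  rw [← h, ← emultiplicity_add_of_gt hb', show -b + (a + b) = a by abel]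

theorem emultiplicity_unit_mul_pow_self {R : Type*} [CommMonoidWithZero R] [IsCancelMulZero R]
    {π u : R} (hπ : Prime π) (hu : IsUnit u) (n : ℕ) : emultiplicity π (u * π ^ n) = n := by
  rw [emultiplicity_mul hπ, emultiplicity_of_isUnit_right hπ.not_isUnit hu,
    emultiplicity_pow_self_of_prime hπ, zero_add]

theorem emultiplicity_eq_of_pow_succ_dvd_sub {R : Type*} [CommRing R] [IsDomain R] {π u b : R}
    {n : ℕ} (hπ : Prime π) (hu : IsUnit u) (h : π ^ (n + 1) ∣ b - u * π ^ n) :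
    emultiplicity π b = n := by
  have hlt : emultiplicity π (u * π ^ n) < emultiplicity π (b - u * π ^ n) := by
    rw [emultiplicity_unit_mul_pow_self hπ hu]
    exact (ENat.natCast_lt_natCast.mpr n.lt_succ_self).trans_le (le_emultiplicity_of_pow_dvd h)
  rw [← emultiplicity_unit_mul_pow_self hπ hu n, ← emultiplicity_add_of_gt hlt, sub_add_cancel]

theorem ENat.dvd_of_natCast_mul_eq {k n : ℕ} {e : ℕ∞} (hk : k ≠ 0)
    (h : (k : ℕ∞) * e = n) : k ∣ n := by
  induction e using ENat.recTopCoe with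
  | top => simp [ENat.mul_top, hk] at h
  | coe m => exact ⟨m, by exact_mod_cast h.symm⟩

theorem dvd_of_emultiplicity_pow_sub_one_eq {R : Type*} [CommRing R] [IsDomain R] {π z : R}
    {p n : ℕ} (hπ : Prime π) (hp : p.Prime) (hpπ : π ^ (n + 1) ∣ (p : R))
    (h : emultiplicity π (z ^ p - 1) = n) : p ∣ n := by
  obtain ⟨r, hr⟩ := exists_add_pow_prime_eq hp (z - 1) 1
  have hsplit : z ^ p - 1 = (z - 1) ^ p + p * ((z - 1) * r) := by
    linear_combination hr
  have hlt : (n : ℕ∞) < emultiplicity π (p * ((z - 1) * r)) :=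
    (ENat.natCast_lt_natCast.mpr n.lt_succ_self).trans_le
      (le_emultiplicity_of_pow_dvd (hpπ.mul_right _))
  have hpow := emultiplicity_eq_of_add_of_lt (hsplit ▸ h) hlt
  rw [emultiplicity_pow hπ] at hpow
  exact ENat.dvd_of_natCast_mul_eq hp.ne_zero hpow

theorem exists_pow_eq_of_pow_eq_algebraMap {R K : Type*} [CommRing R] [IsIntegrallyClosed R]
    [CommRing K] [Algebra R K] [IsFractionRing R K] {n : ℕ} (hn : 0 < n) {x : R} {y : K}
    (hy : y ^ n = algebraMap R K x) : ∃ z : R, z ^ n = x := by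
  obtain ⟨z, rfl⟩ := IsIntegrallyClosed.exists_algebraMap_eq_of_isIntegral_pow (R := R) hn
    (hy ▸ isIntegral_algebraMap)
  exact ⟨z, IsFractionRing.injective R K (by rw [map_pow, hy])⟩

theorem sum_range_succ_eq_last {M : Type*} [AddCommMonoid M] {f : ℕ → M} {n : ℕ}
    (h : ∀ k < n, f k = 0) : ∑ k ∈ range (n + 1), f k = f n := by
  rw [sum_range_succ, sum_eq_zero fun k hk => h k (mem_range.mp hk), zero_add]

theorem no_pth_root_general (p : ℕ) (hp : p.Prime)
    (O : Type*) [CommRing O] [IsDomain O] [IsDiscreteValuationRing O]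
    (π : O) (hπ : Irreducible π)
    (n₀ : ℕ) (a : ℕ → O)
    (ha : ∀ n, a n = 0 ∨ ∃ k : ℕ, 0 < k ∧ ¬ p ∣ k ∧ a n ^ k = 1)
    (hlow : ∀ n < n₀, a n = 0) (hne : a n₀ ≠ 0)
    (x : O)
    (hx : ∀ N : ℕ, x - (1 + ∑ n ∈ Finset.range N, a n * π ^ n) ∈ Ideal.span {π ^ N})
    (hn₀p : ¬ p ∣ n₀) (hval : π ^ (n₀ + 1) ∣ (p : O)) :
    ¬ ∃ y : FractionRing O, y ^ p = algebraMap O (FractionRing O) x := by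
  rintro ⟨y, hy⟩
  obtain ⟨z, rfl⟩ := exists_pow_eq_of_pow_eq_algebraMap hp.pos hy
  obtain ⟨k, hk, -, hak⟩ := (ha n₀).resolve_left hne
  have hleading : π ^ (n₀ + 1) ∣ z ^ p - 1 - a n₀ * π ^ n₀ := by
    have := hx (n₀ + 1)
    rwa [sum_range_succ_eq_last fun n hn => by rw [hlow n hn, zero_mul],
      Ideal.mem_span_singleton, ← sub_sub] at this
  have hv := emultiplicity_eq_of_pow_succ_dvd_sub hπ.prime (.of_pow_eq_one hak hk.ne') hleading
  exact hn₀p (dvd_of_emultiplicity_pow_sub_one_eq hπ.prime hp hval hv)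

/-- Let `O` be the ring of integers of a finite extension `L` of `ℚ_p`, abstracted as a
complete discrete valuation ring of characteristic zero with uniformizer `π` and residue
characteristic `p`, and let `L` be its fraction field.  Let
`x = 1 + ∑_{n ≥ n₀} a_n π^n` be a principal unit whose `π`-adic coefficients `a_n` are `0` or
roots of unity of order prime to `p`, `n₀` being the least positive index with `a_{n₀} ≠ 0`
(the series is expressed by the condition that `x` agrees with every partial sum modulo the
corresponding power of `π`).  If `p ∤ n₀` and `n₀ < v_L(p)` (i.e. `π^(n₀+1) ∣ p`), then `x`
has no `p`-th root in `L`. -/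
theorem no_pth_root (p : ℕ) (hp : p.Prime)
    (O : Type*) [CommRing O] [IsDomain O] [IsDiscreteValuationRing O] [CharZero O]
    (π : O) (hπ : Irreducible π) (hcompl : IsAdicComplete (Ideal.span {π}) O)
    (n₀ : ℕ) (hn₀ : 0 < n₀) (a : ℕ → O)
    (ha : ∀ n, a n = 0 ∨ ∃ k : ℕ, 0 < k ∧ ¬ p ∣ k ∧ a n ^ k = 1)
    (hlow : ∀ n < n₀, a n = 0) (hne : a n₀ ≠ 0)
    (x : O) (hxu : IsUnit x)
    (hx : ∀ N : ℕ, x - (1 + ∑ n ∈ Finset.range N, a n * π ^ n) ∈ Ideal.span {π ^ N})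
    (hn₀p : ¬ p ∣ n₀) (hval : π ^ (n₀ + 1) ∣ (p : O)) :
    ¬ ∃ y : FractionRing O, y ^ p = algebraMap O (FractionRing O) x :=
  no_pth_root_general p hp O π hπ n₀ a ha hlow hne x hx hn₀p hval
end

section
/- Every open subgroup of the profinite group $\prod_p \mathbb{F}_p$ (product over all primes, each $\mathbb{F}_p$ with the discrete topology, product topology) is of the form $C_\Sigma = \prod_{p \in \Sigma} \mathbb{F}_p \times \prod_{p \notin \Sigma} \{0\}$ for some cofinite set $\Sigma$ of primes. -/
/-- Each `ZMod n` carries the discrete topology. -/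
instance zmodTopSpace (n : ℕ) : TopologicalSpace (ZMod n) := ⊥

instance zmodDiscrete (n : ℕ) : DiscreteTopology (ZMod n) := ⟨rfl⟩

/-!
An open subgroup `U` contains a basic neighbourhood of `0`, i.e. the subgroup `K_F` of elements
vanishing on a finite set `F` of primes. If `u ∈ U` and `n` is the product of the primes of `F`
other than `p`, then `n • u` agrees with `Pi.single p (n • u p)` modulo `K_F`; as `n` is a unit
mod `p`, `U` contains the whole factor `𝔽_p` as soon as some `u ∈ U` has `u p ≠ 0`. Hence
`U = C_Σ` for `Σ` the set of primes whose factor lies in `U`, and `Σ ⊇ Fᶜ`.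
-/

namespace AddSubgroup

variable {ι : Type*} {G : ι → Type*}

theorem exists_pi_bot_le_of_isOpen [∀ i, AddGroup (G i)] [∀ i, TopologicalSpace (G i)]
    {U : AddSubgroup (∀ i, G i)} (hU : IsOpen (U : Set (∀ i, G i))) :
    ∃ F : Finset ι, pi (F : Set ι) (fun _ => ⊥) ≤ U := by
  obtain ⟨F, v, hv, hFv⟩ := isOpen_pi_iff.mp hU 0 U.zero_mem
  refine ⟨F, fun x hx => hFv fun i hi => ?_⟩
  rw [(mem_pi _).mp hx i hi]
  exact (hv i hi).2

theorem single_mem_pi_bot_of_notMem [DecidableEq ι] [∀ i, AddGroup (G i)] {I : Set ι} {i : ι}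
    (hi : i ∉ I) (a : G i) : Pi.single i a ∈ pi I (fun _ => ⊥) :=
  (mem_pi _).mpr fun _ hj => mem_bot.mpr (Pi.single_eq_of_ne (ne_of_mem_of_not_mem hj hi) a)

theorem mem_of_pi_bot_le_of_forall_single_mem [DecidableEq ι] [∀ i, AddCommGroup (G i)]
    {U : AddSubgroup (∀ i, G i)} {F : Finset ι} (hF : pi (F : Set ι) (fun _ => ⊥) ≤ U)
    {x : ∀ i, G i} (hx : ∀ i ∈ F, Pi.single i (x i) ∈ U) : x ∈ U := by
  have hrest : x - ∑ i ∈ F, Pi.single i (x i) ∈ U :=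
    hF <| (mem_pi _).mpr fun i hi => by simp [Finset.sum_pi_single, Finset.mem_coe.mp hi]
  simpa using U.add_mem hrest (U.sum_mem hx)

end AddSubgroup

open AddSubgroup

theorem natCast_prod_erase_ne_zero (F : Finset Nat.Primes) (p : Nat.Primes) :
    ((∏ q ∈ F.erase p, (q : ℕ) : ℕ) : ZMod p) ≠ 0 := by
  rw [Ne, ZMod.natCast_eq_zero_iff, p.2.prime.dvd_finsetProd_iff]
  rintro ⟨q, hq, hpq⟩
  exact (Finset.mem_erase.mp hq).1
    (Subtype.ext ((Nat.prime_dvd_prime_iff_eq p.2 q.2).mp hpq).symm)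

theorem single_mem_of_pi_bot_le {U : AddSubgroup (∀ p : Nat.Primes, ZMod p)}
    {F : Finset Nat.Primes} (hF : pi (F : Set Nat.Primes) (fun _ => ⊥) ≤ U)
    {u : ∀ p : Nat.Primes, ZMod p} (hu : u ∈ U) {p : Nat.Primes} (hup : u p ≠ 0)
    (a : ZMod p) : Pi.single p a ∈ U := by
  have : Fact (p : ℕ).Prime := ⟨p.2⟩
  set n := ∏ q ∈ F.erase p, (q : ℕ)
  have hn : ∀ q ∈ F, q ≠ p → (n : ZMod q) = 0 := fun q hq hqp =>
    (ZMod.natCast_eq_zero_iff _ _).mpr <|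
      Finset.dvd_prod_of_mem _ (Finset.mem_erase.mpr ⟨hqp, hq⟩)
  have hdiff : n • u - Pi.single p (n • u p) ∈ U := hF <| (mem_pi _).mpr fun q hq => by
    rcases eq_or_ne q p with rfl | hqp
    · simp
    · simp [Pi.single_eq_of_ne hqp, nsmul_eq_mul, hn q hq hqp]
  have hsingle : Pi.single p (n • u p) ∈ U := by
    simpa using U.sub_mem (U.nsmul_mem hu n) hdiff
  have hnu : n • u p ≠ 0 := by
    rw [nsmul_eq_mul]
    exact mul_ne_zero (natCast_prod_erase_ne_zero F p) hup
  obtain ⟨k, rfl⟩ := mem_zmultiples_of_prime_card (Nat.card_zmod p) (g' := a) hnu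
  rw [Pi.single_smul]
  exact U.zsmul_mem hsingle k

/-- Every open subgroup of the profinite group `∏_p 𝔽_p` (product over all primes, product
topology, each factor discrete) is of the form `C_Σ = {x | ∀ p ∉ Σ, x_p = 0}` for some cofinite
set `Σ` of primes. -/
theorem open_subgroup_eq_pi (U : AddSubgroup (∀ p : Nat.Primes, ZMod p))
    (hU : IsOpen (U : Set (∀ p : Nat.Primes, ZMod p))) :
    ∃ S : Set Nat.Primes, Sᶜ.Finite ∧ U = AddSubgroup.pi Sᶜ (fun _ => ⊥) := by
  obtain ⟨F, hF⟩ := exists_pi_bot_le_of_isOpen hU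
  refine ⟨{p | ∀ a : ZMod p, Pi.single p a ∈ U}, F.finite_toSet.subset fun p hp => ?_, ?_⟩
  · by_contra hpF
    exact hp fun a => hF (single_mem_pi_bot_of_notMem (G := fun q : Nat.Primes => ZMod q) hpF a)
  · ext x
    simp only [mem_pi, Set.mem_compl_iff, Set.mem_ofPred_eq, mem_bot]
    refine ⟨fun hx p hp => ?_, fun hx => mem_of_pi_bot_le_of_forall_single_mem hF fun q _ => ?_⟩
    · by_contra hxp
      exact hp (single_mem_of_pi_bot_le hF hx hxp)
    · by_cases hq : ∀ a : ZMod q, Pi.single q a ∈ U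
      · exact hq _
      · simp [hx q hq]
end

section
/- Every closed subgroup of the profinite group $\prod_p \mathbb{F}_p$ is of the form $C_\Sigma = \prod_{p \in \Sigma} \mathbb{F}_p \times \prod_{p \notin \Sigma} \{0\}$ for some set $\Sigma$ of primes. -/
theorem mem_closure_pi_of_forall_finset {ι : Type*} {X : ι → Type*}
    [∀ i, TopologicalSpace (X i)] [∀ i, DiscreteTopology (X i)] {s : Set (∀ i, X i)}
    {y : ∀ i, X i} (h : ∀ I : Finset ι, ∃ z ∈ s, ∀ i ∈ I, z i = y i) : y ∈ closure s := by
  refine mem_closure_iff.mpr fun o ho hyo => ?_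
  obtain ⟨I, u, hu, hIu⟩ := isOpen_pi_iff.mp ho y hyo
  obtain ⟨z, hzs, hzy⟩ := h I
  exact ⟨z, hIu fun i hi => (hzy i hi).symm ▸ (hu i hi).2, hzs⟩

theorem denseRange_natCast_pi_zmod {ι : Type*} (n : ι → ℕ) (hn : ∀ i, n i ≠ 0)
    (hcop : Pairwise fun i j => (n i).Coprime (n j)) :
    DenseRange (Nat.cast : ℕ → ∀ i, ZMod (n i)) := by
  refine fun y => mem_closure_pi_of_forall_finset fun I => ?_
  let k := Nat.chineseRemainderOfFinset (fun i => (y i).val) n I (fun i _ => hn i)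
    (hcop.set_pairwise _)
  refine ⟨k, Set.mem_range_self _, fun i hi => ?_⟩
  have := NeZero.mk (hn i)
  rw [Pi.natCast_apply, ← ZMod.natCast_zmod_val (y i), ZMod.natCast_eq_natCast_iff]
  exact k.2 i hi

theorem denseRange_natCast_pi_zmod_primes :
    DenseRange (Nat.cast : ℕ → ∀ p : Nat.Primes, ZMod p) :=
  denseRange_natCast_pi_zmod _ (fun p => p.2.ne_zero)
    fun p q hpq => (Nat.coprime_primes p.2 q.2).mpr (Subtype.coe_injective.ne hpq)

theorem AddSubmonoid.mul_mem_of_isClosed {R : Type*} [Semiring R] [TopologicalSpace R]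
    [ContinuousMul R] (hR : DenseRange (Nat.cast : ℕ → R)) {C : AddSubmonoid R}
    (hC : IsClosed (C : Set R)) (r : R) {x : R} (hx : x ∈ C) : r * x ∈ C :=
  hR.induction_on r (hC.preimage (continuous_mul_const x)) fun n => by
    simpa [nsmul_eq_mul] using C.nsmul_mem hx n

theorem Pi.single_mem_of_isClosed {ι : Type*} [DecidableEq ι] {K : ι → Type*}
    [∀ i, Semiring (K i)] [∀ i, TopologicalSpace (K i)] [∀ i, ContinuousMul (K i)]
    (hK : DenseRange (Nat.cast : ℕ → ∀ i, K i)) {C : AddSubmonoid (∀ i, K i)}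
    (hC : IsClosed (C : Set (∀ i, K i))) {x : ∀ i, K i} (hx : x ∈ C) {i : ι} (hxi : IsUnit (x i))
    (a : K i) : Pi.single i a ∈ C := by
  obtain ⟨u, hu⟩ := hxi
  rw [← Units.inv_mul_cancel_right a u, hu, Pi.single_mul_left]
  exact AddSubmonoid.mul_mem_of_isClosed hK hC _ hx

/-- Every closed subgroup of the profinite group `∏_p 𝔽_p` (product over all primes, product
topology, each factor discrete) is of the form `C_Σ = {x | ∀ p ∉ Σ, x_p = 0}` for some set `Σ`
of primes. -/
theorem closed_subgroup_eq_pi (C : AddSubgroup (∀ p : Nat.Primes, ZMod p))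
    (hC : IsClosed (C : Set (∀ p : Nat.Primes, ZMod p))) :
    ∃ S : Set Nat.Primes, C = AddSubgroup.pi Sᶜ (fun _ => ⊥) := by
  refine ⟨{p | ∃ x ∈ C, x p ≠ 0}, le_antisymm (fun y hy p hp => ?_) fun y hy => ?_⟩
  · exact AddSubgroup.mem_bot.mpr (not_not.mp fun hyp => hp ⟨y, hy, hyp⟩)
  have hsingle (q : Nat.Primes) : Pi.single q (y q) ∈ C := by
    by_cases hyq : y q = 0
    · simp [hyq]
    have : Fact q.1.Prime := ⟨q.2⟩
    obtain ⟨x, hx, hxq⟩ : ∃ x ∈ C, x q ≠ 0 :=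
      not_not.mp fun hq => hyq (AddSubgroup.mem_bot.mp (hy q hq))
    exact Pi.single_mem_of_isClosed denseRange_natCast_pi_zmod_primes
      (C := C.toAddSubmonoid) hC hx (isUnit_iff_ne_zero.mpr hxq) _
  refine hC.closure_subset (mem_closure_pi_of_forall_finset fun I => ?_)
  refine ⟨∑ q ∈ I, Pi.single q (y q), sum_mem fun q _ => hsingle q, fun i hi => ?_⟩
  simp [Finset.sum_pi_single, hi]
end

section
/- Let G be a profinite group and $f: G \to \prod_p \mathbb{F}_p$ a continuous group homomorphism such that every element of the image of f has finite order. Then f has finite image, and hence f factors through $\bigoplus_p \mathbb{F}_p$, i.e., all but finitely many components of f are zero. -/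
/-!
The image `A` of `f` is a compact additive submonoid of `∏_p 𝔽_p`. Given finitely many primes,
each in the support of some element of `A`, an integer combination of these elements is nonzero
at all of them at once; by compactness a single element of `A` is then nonzero at every prime of
the union `S` of all supports. That element is torsion, so its support, and hence `S`, is
finite, and `A` embeds into the finite group `∏_{p ∈ S} 𝔽_p`.
-/

theorem ZMod.nsmul_eq_zero_iff {p : ℕ} (hp : p.Prime) {n : ℕ} {a : ZMod p} :
    n • a = 0 ↔ p ∣ n ∨ a = 0 := by
  have := Fact.mk hp
  rw [nsmul_eq_mul, mul_eq_zero, ZMod.natCast_eq_zero_iff]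

theorem Nat.Primes.dvd_prod_iff_mem {q : Nat.Primes} {F : Finset Nat.Primes} :
    (q : ℕ) ∣ ∏ p ∈ F, (p : ℕ) ↔ q ∈ F := by
  refine ⟨fun h => ?_, Finset.dvd_prod_of_mem _⟩
  obtain ⟨p, hpF, hqp⟩ := (Nat.prime_iff.mp q.2).dvd_finsetProd_iff _ |>.mp h
  rwa [Nat.Primes.coe_nat_injective ((Nat.prime_dvd_prime_iff_eq q.2 p.2).mp hqp)]

theorem finite_setOf_forall_notMem_eq_zero {ι : Type*} {π : ι → Type*} [∀ i, Zero (π i)]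
    [∀ i, Finite (π i)] {S : Set ι} (hS : S.Finite) :
    {x : ∀ i, π i | ∀ i ∉ S, x i = 0}.Finite := by
  have : Finite S := hS
  refine Set.Finite.of_finite_image (Set.toFinite _) (f := S.domRestrict) fun x hx y hy hxy => ?_
  funext i
  by_cases hi : i ∈ S
  · exact congrFun hxy ⟨i, hi⟩
  · rw [hx i hi, hy i hi]

theorem IsOfFinAddOrder.finite_setOf_apply_ne_zero {x : ∀ p : Nat.Primes, ZMod p}
    (hx : IsOfFinAddOrder x) : {p | x p ≠ 0}.Finite := by
  obtain ⟨n, hn, hnx⟩ := isOfFinAddOrder_iff_nsmul_eq_zero.mp hx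
  refine (n.primeFactors.finite_toSet.preimage Nat.Primes.coe_nat_injective.injOn).subset
    fun p hp => Nat.mem_primeFactors.mpr ⟨p.2, ?_, hn.ne'⟩
  have hnxp : n • x p = 0 := congrFun hnx p
  exact ((ZMod.nsmul_eq_zero_iff p.2).mp hnxp).resolve_right hp

theorem AddSubmonoid.exists_forall_apply_ne_zero (A : AddSubmonoid (∀ p : Nat.Primes, ZMod p))
    (F : Finset Nat.Primes) (hF : ∀ p ∈ F, ∃ x ∈ A, x p ≠ 0) : ∃ x ∈ A, ∀ p ∈ F, x p ≠ 0 := by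
  classical
  induction F using Finset.induction_on with
  | empty => exact ⟨0, A.zero_mem, by simp⟩
  | insert q F hqF ih =>
    obtain ⟨x, hxA, hx⟩ := ih fun p hp => hF p (Finset.mem_insert_of_mem hp)
    obtain ⟨y, hyA, hy⟩ := hF q (Finset.mem_insert_self q F)
    -- at `p ∈ F` only the first summand survives, at `q` only the second
    refine ⟨(q : ℕ) • x + (∏ p ∈ F, (p : ℕ)) • y,
      A.add_mem (A.nsmul_mem hxA _) (A.nsmul_mem hyA _), ?_⟩
    simp only [Finset.mem_insert, forall_eq_or_imp, Pi.add_apply, Pi.smul_apply]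
    refine ⟨?_, fun p hp => ?_⟩
    · rw [(ZMod.nsmul_eq_zero_iff q.2).mpr (.inl dvd_rfl), zero_add, Ne,
        ZMod.nsmul_eq_zero_iff q.2, Nat.Primes.dvd_prod_iff_mem]
      tauto
    · rw [(ZMod.nsmul_eq_zero_iff p.2).mpr (.inl (Nat.Primes.dvd_prod_iff_mem.mpr hp)), add_zero,
        Ne, ZMod.nsmul_eq_zero_iff p.2, Nat.prime_dvd_prime_iff_eq p.2 q.2]
      have hpq : (p : ℕ) ≠ q := fun h => hqF (Nat.Primes.coe_nat_injective h ▸ hp)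
      tauto

theorem AddSubmonoid.finite_setOf_exists_apply_ne_zero_of_isCompact
    (A : AddSubmonoid (∀ p : Nat.Primes, ZMod p))
    (hA : IsCompact (A : Set (∀ p : Nat.Primes, ZMod p))) (htors : ∀ x ∈ A, IsOfFinAddOrder x) :
    {p | ∃ x ∈ A, x p ≠ 0}.Finite := by
  set S := {p | ∃ x ∈ A, x p ≠ 0}
  obtain ⟨x, hxA, hx⟩ := hA.inter_iInter_nonempty (fun p : S => {x | x p ≠ 0})
    (fun p => (isClosed_discrete {0}ᶜ).preimage (continuous_apply (p : Nat.Primes)))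
    fun u => by
      obtain ⟨x, hxA, hx⟩ := A.exists_forall_apply_ne_zero (u.map (Function.Embedding.subtype _))
        fun p hp => by obtain ⟨⟨p, hpS⟩, -, rfl⟩ := Finset.mem_map.mp hp; exact hpS
      exact ⟨x, hxA, Set.mem_iInter₂.mpr fun p hp => hx p (Finset.mem_map_of_mem _ hp)⟩
  exact (htors x hxA).finite_setOf_apply_ne_zero.subset fun p hp => Set.mem_iInter.mp hx ⟨p, hp⟩

theorem continuous_hom_torsion_image_finite_general (G : Type*) [Group G] [TopologicalSpace G]
    [CompactSpace G]
    (f : G → ∀ p : Nat.Primes, ZMod p) (hf : Continuous f)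
    (hhom : ∀ a b : G, f (a * b) = f a + f b)
    (htors : ∀ a : G, IsOfFinAddOrder (f a)) :
    (Set.range f).Finite ∧ {p : Nat.Primes | ∃ a : G, f a p ≠ 0}.Finite := by
  let φ : Additive G →+ ∀ p : Nat.Primes, ZMod p := AddMonoidHom.mk' (fun a => f a.toMul) hhom
  set A := AddMonoidHom.mrange φ
  have hA : (A : Set (∀ p : Nat.Primes, ZMod p)) = Set.range f := rfl
  have hsupp : {p : Nat.Primes | ∃ a : G, f a p ≠ 0}.Finite := by
    refine (A.finite_setOf_exists_apply_ne_zero_of_isCompact ?_ ?_).subset ?_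
    · exact hA ▸ isCompact_range hf
    · rintro _ ⟨a, rfl⟩
      exact htors a
    · rintro p ⟨a, ha⟩
      exact ⟨f a, ⟨a, rfl⟩, ha⟩
  have (p : Nat.Primes) : Finite (ZMod p) := have := Fact.mk p.2; inferInstance
  refine ⟨(finite_setOf_forall_notMem_eq_zero hsupp).subset ?_, hsupp⟩
  rintro _ ⟨a, rfl⟩ p hp
  by_contra h
  exact hp ⟨a, h⟩

/-- Let `G` be a profinite group and `f : G → ∏_p 𝔽_p` a continuous homomorphism all of whose
values have finite order.  Then `f` has finite image, and all but finitely many components of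
`f` vanish (so `f` factors through `⊕_p 𝔽_p`). -/
theorem continuous_hom_torsion_image_finite (G : Type*) [Group G] [TopologicalSpace G]
    [IsTopologicalGroup G] [CompactSpace G] [T2Space G] [TotallyDisconnectedSpace G]
    (f : G → ∀ p : Nat.Primes, ZMod p) (hf : Continuous f)
    (hhom : ∀ a b : G, f (a * b) = f a + f b)
    (htors : ∀ a : G, IsOfFinAddOrder (f a)) :
    (Set.range f).Finite ∧ {p : Nat.Primes | ∃ a : G, f a p ≠ 0}.Finite :=
  continuous_hom_torsion_image_finite_general G f hf hhom htors
end
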